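/- arXiv:1904.07517 — 8 statements merged into one kernel-verified Lean document; each statement's English description precedes it below -/
import Mathlib

section
/- Let n, k, d be positive integers and let C be a quaternary Hermitian LCD [n,k,d] code. If every quaternary Hermitian LCD [n-1,k] code has minimum weight at most d-1, then the Hermitian dual C^{⊥H} contains no vector of weight 1 (equivalently, d(C^{⊥H}) ≥ 2). -/
open scoped Classical

noncomputable section

/-- The finite field with four elements. -/
abbrev F4 := GaloisField 2 2

/-- The (Hamming) weight of a vector over `F4`: the number of nonzero coordinates. -/
def wt {n : ℕ} (x : Fin n → F4) : ℕ :=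
  (Finset.univ.filter (fun i => x i ≠ 0)).card

/-- Hermitian inner product on `F4^n`: `∑ i, x i * (conj (y i))` with `conj z = z^2`. -/
def hermInner {n : ℕ} (x y : Fin n → F4) : F4 :=
  ∑ i, x i * (y i) ^ 2

/-- Membership in the Hermitian dual `C^{⊥H}` of a code `C`. -/
def inHermDual {n : ℕ} (C : Submodule F4 (Fin n → F4)) (x : Fin n → F4) : Prop :=
  ∀ y ∈ C, hermInner x y = 0

/-- `C` is Hermitian LCD: `C ∩ C^{⊥H} = {0}`. -/
def IsHermLCD {n : ℕ} (C : Submodule F4 (Fin n → F4)) : Prop :=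
  ∀ x ∈ C, inHermDual C x → x = 0

/-- `C` has minimum weight (exactly) `d`. -/
def minWtIs {n : ℕ} (C : Submodule F4 (Fin n → F4)) (d : ℕ) : Prop :=
  (∃ x ∈ C, x ≠ 0 ∧ wt x = d) ∧ ∀ x ∈ C, x ≠ 0 → d ≤ wt x

/-- `C` is a quaternary Hermitian LCD `[n,k,d]` code. -/
def IsHermLCDCode (n k d : ℕ) (C : Submodule F4 (Fin n → F4)) : Prop :=
  Module.finrank F4 C = k ∧ IsHermLCD C ∧ minWtIs C d

/-- `d₄(n,k) = d`: the largest minimum weight among quaternary Hermitian LCD `[n,k]` codes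
is `d`. -/
def d4Is (n k d : ℕ) : Prop :=
  (∃ C : Submodule F4 (Fin n → F4), IsHermLCDCode n k d C) ∧
  (∀ C : Submodule F4 (Fin n → F4), Module.finrank F4 C = k → IsHermLCD C →
    ∃ x ∈ C, x ≠ 0 ∧ wt x ≤ d)

end

/-- If `C` is a quaternary Hermitian LCD `[n,k,d]` code and every quaternary
Hermitian LCD `[n-1,k]` code has minimum weight at most `d-1`, then `C^{⊥H}` contains no
vector of weight 1. -/
theorem stmt0 (n k d : ℕ) (hn : 1 ≤ n) (hk : 1 ≤ k) (hd : 1 ≤ d)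
    (C : Submodule F4 (Fin n → F4)) (hC : IsHermLCDCode n k d C)
    (h : ∀ D : Submodule F4 (Fin (n - 1) → F4),
      Module.finrank F4 D = k → IsHermLCD D → ∃ x ∈ D, x ≠ 0 ∧ wt x ≤ d - 1) :
    ∀ x, inHermDual C x → wt x ≠ 1 := by
  intro x hxdual hwt
  set m := n - 1 with hm0
  have hm : n = m + 1 := (Nat.succ_pred_eq_of_pos hn).symm
  obtain ⟨hCk, hClcd, hCmin⟩ := hC
  -- weight-1 vector: unique support i₀
  obtain ⟨i₀, hi₀⟩ := Finset.card_eq_one.mp hwt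
  have hx₀ : x i₀ ≠ 0 := by
    have : i₀ ∈ Finset.univ.filter (fun i => x i ≠ 0) := hi₀ ▸ Finset.mem_singleton_self i₀
    simpa using this
  have hxother : ∀ i, i ≠ i₀ → x i = 0 := by
    intro i hi
    by_contra hxi
    have : i ∈ Finset.univ.filter (fun i => x i ≠ 0) := by simpa using hxi
    rw [hi₀, Finset.mem_singleton] at this
    exact hi this
  -- every codeword vanishes at i₀
  have hzero : ∀ v ∈ C, v i₀ = 0 := by
    intro v hv
    have hsum : hermInner x v = x i₀ * (v i₀) ^ 2 := by
      unfold hermInner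
      exact Finset.sum_eq_single i₀
        (fun i _ hi => by rw [hxother i hi, zero_mul])
        (fun hi => absurd (Finset.mem_univ i₀) hi)
    have h0 := hxdual v hv
    rw [hsum] at h0
    have := mul_eq_zero.mp h0
    rcases this with h1 | h1
    · exact absurd h1 hx₀
    · exact pow_eq_zero_iff (by norm_num) |>.mp h1
  -- puncturing map
  set i₁ : Fin (m + 1) := Fin.cast hm i₀ with hi₁
  set σ : Fin m → Fin n := fun j => Fin.cast hm.symm (i₁.succAbove j) with hσ
  have hσne : ∀ j, σ j ≠ i₀ := by
    intro j hj
    apply Fin.succAbove_ne i₁ j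
    apply Fin.val_injective
    have : (σ j : ℕ) = (i₀ : ℕ) := congrArg Fin.val hj
    simpa [hσ, hi₁] using this
  -- sum decomposition
  have hsum_dec : ∀ {M : Type} [AddCommMonoid M] (f : Fin n → M),
      ∑ i, f i = f i₀ + ∑ j : Fin m, f (σ j) := by
    intro M _ f
    have e1 : ∑ i, f i = ∑ i' : Fin (m + 1), f (Fin.cast hm.symm i') :=
      (Fintype.sum_equiv (finCongr hm.symm) _ f (fun i' => rfl)).symm
    rw [e1, Fin.sum_univ_succAbove (fun i' => f (Fin.cast hm.symm i')) i₁]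
    have hcc : Fin.cast hm.symm i₁ = i₀ := Fin.val_injective (by simp [hi₁])
    rw [hcc]
  set φ : (Fin n → F4) →ₗ[F4] (Fin m → F4) := LinearMap.funLeft F4 F4 σ with hφ
  have hφapp : ∀ (v : Fin n → F4) (j : Fin m), φ v j = v (σ j) := fun _ _ => rfl
  -- φ injective on vectors vanishing at i₀
  have hφinj : ∀ v : Fin n → F4, v i₀ = 0 → φ v = 0 → v = 0 := by
    intro v hv0 hφv
    funext i
    by_cases hi : i = i₀
    · rw [hi, hv0]; rfl
    · have hi' : Fin.cast hm i ≠ i₁ := by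
        intro hc
        exact hi (Fin.val_injective (by simpa [hi₁] using congrArg Fin.val hc))
      obtain ⟨j, hj⟩ := Fin.exists_succAbove_eq hi'
      have : σ j = i := by
        apply Fin.val_injective
        simpa [hσ] using congrArg Fin.val hj
      rw [← this]
      have := congrFun hφv j
      simpa [hφapp] using this
  -- hermInner preserved
  have hherm : ∀ v y : Fin n → F4, v i₀ = 0 → hermInner v y = hermInner (φ v) (φ y) := by
    intro v y hv0
    unfold hermInner
    rw [hsum_dec (fun i => v i * y i ^ 2), hv0, zero_mul, zero_add]
    rfl
  -- weight preserved
  have hwteq : ∀ v : Fin n → F4, v i₀ = 0 → wt (φ v) = wt v := by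
    intro v hv0
    unfold wt
    rw [Finset.card_filter, Finset.card_filter,
      hsum_dec (fun i => if v i ≠ 0 then 1 else 0)]
    simp [hv0, hφapp]
  set D : Submodule F4 (Fin m → F4) := C.map φ with hD
  have hker : ∀ v ∈ C, φ v = 0 → v = 0 := fun v hv => hφinj v (hzero v hv)
  -- rank
  have hinj : Function.Injective (φ.domRestrict C) := by
    rw [injective_iff_map_eq_zero]
    intro ⟨v, hv⟩ hv0
    exact Subtype.ext (hker v hv hv0)
  have hrank : Module.finrank F4 D = k := by
    rw [← hCk]
    have e := LinearEquiv.ofInjective (φ.domRestrict C) hinj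
    rw [show D = LinearMap.range (φ.domRestrict C) from (LinearMap.range_domRestrict C φ).symm]
    exact (e.finrank_eq).symm
  -- LCD
  have hlcd : IsHermLCD D := by
    intro w hw hwdual
    obtain ⟨v, hv, rfl⟩ := hw
    have hvdual : inHermDual C v := by
      intro y hy
      rw [hherm v y (hzero v hv)]
      exact hwdual (φ y) ⟨y, hy, rfl⟩
    rw [hClcd v hv hvdual]
    exact map_zero φ
  obtain ⟨w, hw, hwne, hwle⟩ := h D hrank hlcd
  obtain ⟨v, hv, rfl⟩ := hw
  have hvne : v ≠ 0 := fun hv0 => hwne (by rw [hv0, map_zero])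
  have := hCmin.2 v hv hvne
  rw [← hwteq v (hzero v hv)] at this
  omega
end

section
/- Let G₁ be a k × n₁ matrix over 𝔽₄ whose row space is a quaternary Hermitian LCD [n₁,k,d₁] code, and let G₂ be a k × n₂ matrix over 𝔽₄ whose row space is a quaternary Hermitian self-orthogonal [n₂,k,d₂] code. Then the row space of the k × (n₁+n₂) block matrix (G₁ | G₂) is a quaternary Hermitian LCD code of length n₁+n₂ and dimension k whose minimum weight is at least d₁ + d₂. -/
open scoped Classical

/-! A codeword of the juxtaposed code is `(∑ cᵢ G₁ᵢ | ∑ cᵢ G₂ᵢ)` for a coefficient vector `c`.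
The rows of `G₁` and of `G₂` are independent, so `c ≠ 0` makes both halves nonzero: this gives
dimension `k` and weight at least `d₁ + d₂`. As the second code is Hermitian self-orthogonal, the
Hermitian form between two such codewords is that of their left halves; so the left half of a
codeword in the Hermitian dual lies in `C₁ ∩ C₁^⊥H = 0`, which forces `c = 0`. -/

open Submodule

section FinAppend

variable {R M ι : Type*} [Semiring R] [AddCommMonoid M] [Module R M] {m n : ℕ}

theorem Fin.append_eq_zero_iff {α : Type*} [Zero α] {a : Fin m → α} {b : Fin n → α} :
    Fin.append a b = 0 ↔ a = 0 ∧ b = 0 := by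
  refine ⟨fun h => ⟨funext fun j => ?_, funext fun j => ?_⟩, fun ⟨ha, hb⟩ => ?_⟩
  · simpa using congrFun h (Fin.castAdd n j)
  · simpa using congrFun h (Fin.natAdd m j)
  · subst ha hb
    funext j
    refine Fin.addCases (fun j => ?_) (fun j => ?_) j <;> simp

theorem Fin.sum_smul_append [Fintype ι] (c : ι → R) (f : ι → Fin m → M) (g : ι → Fin n → M) :
    ∑ i, c i • Fin.append (f i) (g i) = Fin.append (∑ i, c i • f i) (∑ i, c i • g i) := by
  funext j
  refine Fin.addCases (fun j => ?_) (fun j => ?_) j <;> simp [Finset.sum_apply]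

theorem mem_span_range_fin_append_iff [Fintype ι] {f : ι → Fin m → M} {g : ι → Fin n → M}
    {x : Fin (m + n) → M} :
    x ∈ span R (Set.range fun i => Fin.append (f i) (g i)) ↔
      ∃ c : ι → R, Fin.append (∑ i, c i • f i) (∑ i, c i • g i) = x := by
  simp only [mem_span_range_iff_exists_fun, Fin.sum_smul_append]

theorem LinearIndependent.fin_append_of_left {f : ι → Fin m → M} (hf : LinearIndependent R f)
    (g : ι → Fin n → M) : LinearIndependent R fun i => Fin.append (f i) (g i) :=
  LinearIndependent.of_comp (LinearMap.funLeft R M (Fin.castAdd n)) <| by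
    convert hf
    funext i j
    simp [LinearMap.funLeft_apply]

end FinAppend

theorem wt_append {n₁ n₂ : ℕ} (a : Fin n₁ → F4) (b : Fin n₂ → F4) :
    wt (Fin.append a b) = wt a + wt b := by
  simp only [wt, Finset.card_filter, Fin.sum_univ_add, Fin.append_left, Fin.append_right]

theorem hermInner_append {n₁ n₂ : ℕ} (a a' : Fin n₁ → F4) (b b' : Fin n₂ → F4) :
    hermInner (Fin.append a b) (Fin.append a' b') = hermInner a a' + hermInner b b' := by
  simp only [hermInner, Fin.sum_univ_add, Fin.append_left, Fin.append_right]

section Juxtaposition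

variable {k n₁ n₂ : ℕ} {G₁ : Matrix (Fin k) (Fin n₁) F4} {G₂ : Matrix (Fin k) (Fin n₂) F4}

theorem isHermLCD_span_append (hG₁ : LinearIndependent F4 G₁)
    (hlcd : IsHermLCD (span F4 (Set.range G₁)))
    (hso : ∀ b ∈ span F4 (Set.range G₂), inHermDual (span F4 (Set.range G₂)) b) :
    IsHermLCD (span F4 (Set.range fun i => Fin.append (G₁ i) (G₂ i))) := by
  intro x hx hdual
  obtain ⟨c, rfl⟩ := mem_span_range_fin_append_iff.mp hx
  have hb : ∑ i, c i • G₂ i ∈ span F4 (Set.range G₂) :=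
    mem_span_range_iff_exists_fun F4 |>.mpr ⟨c, rfl⟩
  have hdual₁ : inHermDual (span F4 (Set.range G₁)) (∑ i, c i • G₁ i) := by
    intro a' ha'
    obtain ⟨c', rfl⟩ := mem_span_range_iff_exists_fun F4 |>.mp ha'
    have hb' : ∑ i, c' i • G₂ i ∈ span F4 (Set.range G₂) :=
      mem_span_range_iff_exists_fun F4 |>.mpr ⟨c', rfl⟩
    have h := hdual _ (mem_span_range_fin_append_iff.mpr ⟨c', rfl⟩)
    rwa [hermInner_append, hso _ hb _ hb', add_zero] at h
  have hc : c = 0 := funext <| Fintype.linearIndependent_iff.mp hG₁ c <|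
    hlcd _ (mem_span_range_iff_exists_fun F4 |>.mpr ⟨c, rfl⟩) hdual₁
  simp [hc, Fin.append_eq_zero_iff]

theorem add_le_wt_of_mem_span_append {d₁ d₂ : ℕ} (hG₁ : LinearIndependent F4 G₁)
    (hG₂ : LinearIndependent F4 G₂)
    (hd₁ : ∀ a ∈ span F4 (Set.range G₁), a ≠ 0 → d₁ ≤ wt a)
    (hd₂ : ∀ b ∈ span F4 (Set.range G₂), b ≠ 0 → d₂ ≤ wt b) :
    ∀ x ∈ span F4 (Set.range fun i => Fin.append (G₁ i) (G₂ i)), x ≠ 0 → d₁ + d₂ ≤ wt x := by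
  intro x hx hx0
  obtain ⟨c, rfl⟩ := mem_span_range_fin_append_iff.mp hx
  have hc : c ≠ 0 := by
    rintro rfl
    simp [Fin.append_eq_zero_iff] at hx0
  have hcomb {n : ℕ} {G : Matrix (Fin k) (Fin n) F4} (hG : LinearIndependent F4 G) :
      ∑ i, c i • G i ≠ 0 := fun h =>
    hc <| funext <| Fintype.linearIndependent_iff.mp hG c h
  rw [wt_append]
  exact add_le_add (hd₁ _ (mem_span_range_iff_exists_fun F4 |>.mpr ⟨c, rfl⟩) (hcomb hG₁))
    (hd₂ _ (mem_span_range_iff_exists_fun F4 |>.mpr ⟨c, rfl⟩) (hcomb hG₂))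

end Juxtaposition

/-- juxtaposing a generator matrix of a Hermitian LCD `[n₁,k,d₁]` code with a
generator matrix of a Hermitian self-orthogonal `[n₂,k,d₂]` code gives a Hermitian LCD
code of length `n₁+n₂`, dimension `k` and minimum weight at least `d₁+d₂`. -/
theorem stmt1 (k n₁ n₂ d₁ d₂ : ℕ)
    (G₁ : Matrix (Fin k) (Fin n₁) F4) (G₂ : Matrix (Fin k) (Fin n₂) F4)
    (hG₁ : IsHermLCDCode n₁ k d₁ (Submodule.span F4 (Set.range fun i => G₁ i)))
    (hG₂fr : Module.finrank F4 (Submodule.span F4 (Set.range fun i => G₂ i)) = k)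
    (hG₂so : ∀ x ∈ Submodule.span F4 (Set.range fun i => G₂ i),
      inHermDual (Submodule.span F4 (Set.range fun i => G₂ i)) x)
    (hG₂d : minWtIs (Submodule.span F4 (Set.range fun i => G₂ i)) d₂) :
    Module.finrank F4
        (Submodule.span F4 (Set.range fun i => Fin.append (G₁ i) (G₂ i))) = k ∧
    IsHermLCD (Submodule.span F4 (Set.range fun i => Fin.append (G₁ i) (G₂ i))) ∧
    ∀ x ∈ Submodule.span F4 (Set.range fun i => Fin.append (G₁ i) (G₂ i)),
      x ≠ 0 → d₁ + d₂ ≤ wt x := by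
  obtain ⟨hfr₁, hlcd₁, -, hd₁⟩ := hG₁
  have hli₁ : LinearIndependent F4 G₁ :=
    linearIndependent_iff_card_eq_finrank_span.mpr (by simpa [Set.finrank] using hfr₁.symm)
  have hli₂ : LinearIndependent F4 G₂ :=
    linearIndependent_iff_card_eq_finrank_span.mpr (by simpa [Set.finrank] using hG₂fr.symm)
  refine ⟨?_, isHermLCD_span_append hli₁ hlcd₁ hG₂so,
    add_le_wt_of_mem_span_append hli₁ hli₂ hd₁ hG₂d.2⟩
  simpa using finrank_span_eq_card (hli₁.fin_append_of_left G₂)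
end

section
/- If n is a positive integer with n ≡ 0 or 4 (mod 5), then there is no quaternary Hermitian LCD [n, 2, ⌊4n/5⌋] code. -/
/-!
Let `C` be a Hermitian LCD `[n, 2, d]` code with `d = ⌊4n/5⌋`. For independent `u, v ∈ C`,
the five points `v` and `u + c • v` of the projective line of `C` cover each coordinate of
the support of `C` exactly four times, so their weights add up to at most `4n`, and to a
multiple of `4`. Parity then yields a point `u` of even weight, and for `n ≡ 0, 4 (mod 5)` the
bound forces the other four points to have weight exactly `d`. As `hermInner x x` is the weight
of `x` mod 2, `u` is isotropic and `x ↦ hermInner x x` is constant on the other points. The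
cross term of `hermInner (u + c • v) (u + c • v)` is the trace of `c ^ 2 * hermInner u v` down
to `𝔽₂`, so `hermInner u v = 0` and `u ∈ C ∩ C^{⊥H}`.
-/

open scoped Classical

noncomputable instance : Fintype F4 := Fintype.ofFinite F4

namespace F4

theorem card_eq : Fintype.card F4 = 4 := by
  simpa [Nat.card_eq_fintype_card] using GaloisField.card 2 2 two_ne_zero

theorem pow_four (x : F4) : x ^ 4 = x := by
  simpa [card_eq] using FiniteField.pow_card x

theorem pow_three_of_ne_zero {x : F4} (hx : x ≠ 0) : x ^ 3 = 1 := by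
  simpa [card_eq] using FiniteField.pow_card_sub_one_eq_one x hx

theorem exists_add_sq_ne_zero : ∃ y : F4, y + y ^ 2 ≠ 0 := by
  obtain ⟨y, -, hy⟩ := Finset.exists_mem_notMem_of_card_lt_card
    (s := ({0, 1} : Finset F4)) (t := Finset.univ)
    (by rw [Finset.card_univ, card_eq]; exact Finset.card_le_two.trans_lt (by norm_num))
  refine ⟨y, fun h => hy ?_⟩
  have : y * (y + 1) = 0 := by linear_combination h
  rcases mul_eq_zero.mp this with h0 | h1
  · simp [h0]
  · simp [CharTwo.add_eq_zero.mp h1]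

end F4

open Finset in
theorem card_filter_add_mul_ne_zero_add_ite {F : Type*} [Field F] [Fintype F]
    [DecidableEq F] (a b : F) :
    #{c | a + c * b ≠ 0} + (if b ≠ 0 then 1 else 0) =
      if a ≠ 0 ∨ b ≠ 0 then Fintype.card F else 0 := by
  by_cases hb : b = 0
  · by_cases ha : a = 0 <;> simp [ha, hb]
  · have hroot : ({c | a + c * b ≠ 0} : Finset F) = Finset.univ.erase (-a / b) := by
      ext c
      simp [eq_div_iff hb, eq_neg_iff_add_eq_zero, add_comm a]
    rw [hroot, Finset.card_erase_of_mem (Finset.mem_univ _), Finset.card_univ, if_pos hb,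
      if_pos (Or.inr hb), Nat.sub_add_cancel Fintype.card_pos]

section Hermitian

variable {n : ℕ}

theorem hermInner_add_left (x y z : Fin n → F4) :
    hermInner (x + y) z = hermInner x z + hermInner y z := by
  simp only [hermInner, Pi.add_apply, add_mul, Finset.sum_add_distrib]

theorem hermInner_add_right (x y z : Fin n → F4) :
    hermInner x (y + z) = hermInner x y + hermInner x z := by
  simp only [hermInner, Pi.add_apply, CharTwo.add_sq, mul_add, Finset.sum_add_distrib]

theorem hermInner_smul_left (c : F4) (x y : Fin n → F4) :
    hermInner (c • x) y = c * hermInner x y := by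
  simp only [hermInner, Pi.smul_apply, smul_eq_mul, Finset.mul_sum, mul_assoc]

theorem hermInner_smul_right (c : F4) (x y : Fin n → F4) :
    hermInner x (c • y) = c ^ 2 * hermInner x y := by
  simp only [hermInner, Pi.smul_apply, smul_eq_mul, Finset.mul_sum]
  exact Finset.sum_congr rfl fun i _ => by ring

theorem hermInner_swap (x y : Fin n → F4) : hermInner y x = hermInner x y ^ 2 := by
  simp only [hermInner, sum_pow_char]
  exact Finset.sum_congr rfl fun i _ => by rw [mul_pow, ← pow_mul, F4.pow_four, mul_comm]

theorem hermInner_self (x : Fin n → F4) : hermInner x x = wt x := by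
  rw [hermInner, wt, Finset.natCast_card_filter]
  refine Finset.sum_congr rfl fun i _ => ?_
  split_ifs with hx
  · rw [← pow_succ', F4.pow_three_of_ne_zero hx]
  · simp [not_not.mp hx]

theorem hermInner_self_add_smul (x y : Fin n → F4) (c : F4) :
    hermInner (x + c • y) (x + c • y) = hermInner x x + c ^ 3 * hermInner y y +
      (c ^ 2 * hermInner x y + (c ^ 2 * hermInner x y) ^ 2) := by
  rw [hermInner_add_left, hermInner_add_right, hermInner_add_right, hermInner_smul_left,
    hermInner_smul_left, hermInner_smul_right, hermInner_smul_right, hermInner_swap x y]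
  linear_combination (-hermInner x y ^ 2) * F4.pow_four c

/-- Every element of `F4` is a square, so `c` can be chosen with `c ^ 2 * hermInner u v` of
nonzero trace `y + y ^ 2`. -/
theorem hermInner_eq_zero_of_isotropic (u v : Fin n → F4)
    (hu : hermInner u u = 0)
    (h : ∀ c : F4, c ≠ 0 → hermInner (u + c • v) (u + c • v) = hermInner v v) :
    hermInner u v = 0 := by
  by_contra hB
  obtain ⟨y, hy⟩ := F4.exists_add_sq_ne_zero
  set c := (y * (hermInner u v)⁻¹) ^ 2
  have hc : c ≠ 0 := pow_ne_zero _ (mul_ne_zero (fun h0 => hy (by simp [h0])) (inv_ne_zero hB))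
  have hcB : c ^ 2 * hermInner u v = y := by
    rw [← pow_mul, mul_pow, F4.pow_four, F4.pow_four, inv_mul_cancel_right₀ hB]
  have := h c hc
  rw [hermInner_self_add_smul, hu, F4.pow_three_of_ne_zero hc, hcB] at this
  exact hy (by linear_combination this)

end Hermitian

section Weights

variable {n : ℕ}

open Finset in
theorem sum_wt_add_smul_add_wt (u v : Fin n → F4) :
    ∑ c : F4, wt (u + c • v) + wt v = 4 * #{i | u i ≠ 0 ∨ v i ≠ 0} := by
  simp only [wt, card_filter, Pi.add_apply, Pi.smul_apply, smul_eq_mul]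
  rw [sum_comm, ← sum_add_distrib, mul_sum]
  refine sum_congr rfl fun i _ => ?_
  rw [← card_filter, card_filter_add_mul_ne_zero_add_ite, F4.card_eq]
  split_ifs <;> rfl

theorem exists_even_wt (u v : Fin n → F4) : Even (wt v) ∨ ∃ c : F4, Even (wt (u + c • v)) := by
  by_contra! hodd
  have hsum : Even (∑ c : F4, wt (u + c • v)) := by
    rw [← Nat.not_odd_iff_even, Finset.odd_sum_iff_odd_card_odd,
      Finset.filter_true_of_mem fun c _ => Nat.not_even_iff_odd.mp (hodd.2 c),
      Finset.card_univ, F4.card_eq]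
    decide
  have := sum_wt_add_smul_add_wt u v
  rw [Nat.even_iff] at hsum hodd
  omega

end Weights

section Pairs

variable {K V : Type*} [Field K] [AddCommGroup V] [Module K V]

theorem LinearIndependent.add_smul_ne_zero {u v : V} (huv : LinearIndependent K ![u, v])
    (c : K) : u + c • v ≠ 0 := fun h =>
  one_ne_zero (LinearIndependent.pair_iff.mp huv 1 c (by rwa [one_smul])).1

theorem Submodule.exists_mem_linearIndependent_pair {C : Submodule K V}
    (hC : 1 < Module.finrank K C) {u : V} (hu : u ∈ C) (hu0 : u ≠ 0) :
    ∃ v ∈ C, LinearIndependent K ![u, v] := by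
  obtain ⟨v, hv⟩ := exists_linearIndependent_pair_of_one_lt_finrank hC
    (x := ⟨u, hu⟩) (by simpa using hu0)
  refine ⟨v, v.2, ?_⟩
  have hcomp : C.subtype ∘ ![⟨u, hu⟩, v] = ![u, (v : V)] := by
    ext i
    fin_cases i <;> rfl
  simpa only [hcomp] using hv.map' C.subtype C.ker_subtype

theorem Submodule.exists_linearIndependent_pair {C : Submodule K V}
    (hC : 1 < Module.finrank K C) : ∃ u ∈ C, ∃ v ∈ C, LinearIndependent K ![u, v] := by
  obtain ⟨u, hu, hu0⟩ := C.exists_mem_ne_zero_of_ne_bot fun h => by subst h; simp at hC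
  exact ⟨u, hu, C.exists_mem_linearIndependent_pair hC hu hu0⟩

theorem Submodule.span_pair_eq_of_finrank_eq_two {C : Submodule K V}
    (hC : Module.finrank K C = 2) {u v : V} (hu : u ∈ C) (hv : v ∈ C)
    (huv : LinearIndependent K ![u, v]) : span K {u, v} = C := by
  have : FiniteDimensional K C := Module.finite_of_finrank_pos (by omega)
  refine eq_of_le_of_finrank_eq
    (span_le.mpr (Set.insert_subset hu (Set.singleton_subset_iff.mpr hv))) ?_
  rw [hC, ← Matrix.range_cons_cons_empty, finrank_span_eq_card huv, Fintype.card_fin]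

end Pairs

section Codes

open Finset

variable {n : ℕ} {C : Submodule F4 (Fin n → F4)}

theorem exists_mem_ne_zero_even_wt (hC : 1 < Module.finrank F4 C) :
    ∃ x ∈ C, x ≠ 0 ∧ Even (wt x) := by
  obtain ⟨u, hu, v, hv, huv⟩ := C.exists_linearIndependent_pair hC
  rcases exists_even_wt u v with hev | ⟨c, hev⟩
  · exact ⟨v, hv, huv.ne_zero 1, hev⟩
  · exact ⟨u + c • v, C.add_mem hu (C.smul_mem c hv), huv.add_smul_ne_zero c, hev⟩

theorem wt_eq_of_four_mul_le {d : ℕ} (hmin : ∀ x ∈ C, x ≠ 0 → d ≤ wt x) {u v : Fin n → F4}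
    (hu : u ∈ C) (hv : v ∈ C) (huv : LinearIndependent F4 ![u, v])
    (hle : 4 * n ≤ wt u + 4 * d) :
    wt v = d ∧ ∀ c : F4, c ≠ 0 → wt (u + c • v) = d := by
  have hlow : ∀ c ∈ univ.erase (0 : F4), d ≤ wt (u + c • v) := fun c _ =>
    hmin _ (C.add_mem hu (C.smul_mem c hv)) (huv.add_smul_ne_zero c)
  have hsum := sum_wt_add_smul_add_wt u v
  rw [← add_sum_erase _ _ (mem_univ 0), zero_smul, add_zero] at hsum
  have hcard : #{i | u i ≠ 0 ∨ v i ≠ 0} ≤ n := (card_filter_le _ _).trans_eq (card_fin n)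
  have h3 := card_nsmul_le_sum _ _ _ hlow
  rw [card_erase_of_mem (mem_univ _), card_univ, F4.card_eq, smul_eq_mul] at h3
  have hwv := hmin v hv (huv.ne_zero 1)
  have htight : ∑ c ∈ univ.erase (0 : F4), wt (u + c • v) =
      ∑ c ∈ univ.erase (0 : F4), d := by
    rw [sum_const, card_erase_of_mem (mem_univ _), card_univ, F4.card_eq, smul_eq_mul]
    omega
  refine ⟨by omega, fun c hc => ?_⟩
  exact (sum_eq_sum_iff_of_le hlow).mp htight.symm c (by simpa using hc) |>.symm

theorem not_isHermLCD_of_isotropic (hC : Module.finrank F4 C = 2) {u v : Fin n → F4}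
    (hu : u ∈ C) (hv : v ∈ C) (huv : LinearIndependent F4 ![u, v])
    (hq : hermInner u u = 0)
    (h : ∀ c : F4, c ≠ 0 → hermInner (u + c • v) (u + c • v) = hermInner v v) :
    ¬ IsHermLCD C := by
  intro hlcd
  have huv0 := hermInner_eq_zero_of_isotropic u v hq h
  refine huv.ne_zero 0 (hlcd u hu fun y hy => ?_)
  rw [← C.span_pair_eq_of_finrank_eq_two hC hu hv huv, Submodule.mem_span_pair] at hy
  obtain ⟨a, b, rfl⟩ := hy
  rw [hermInner_add_right, hermInner_smul_right, hermInner_smul_right, hq, huv0]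
  ring

end Codes

theorem stmt2_general (n : ℕ) (h : n % 5 = 0 ∨ n % 5 = 4) :
    ¬ ∃ C : Submodule F4 (Fin n → F4), IsHermLCDCode n 2 (4 * n / 5) C := by
  rintro ⟨C, hC, hlcd, -, hmin⟩
  obtain ⟨u, hu, hu0, heven⟩ := exists_mem_ne_zero_even_wt (C := C) (by omega)
  obtain ⟨v, hv, huv⟩ := C.exists_mem_linearIndependent_pair (by omega) hu hu0
  have hd := hmin u hu hu0
  have hparity := Nat.even_iff.mp heven
  obtain ⟨hwv, hwc⟩ := wt_eq_of_four_mul_le hmin hu hv huv (by omega)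
  refine not_isHermLCD_of_isotropic hC hu hv huv ?_ (fun c hc => ?_) hlcd
  · rw [hermInner_self, CharP.cast_eq_zero_iff F4 2]
    exact heven.two_dvd
  · rw [hermInner_self, hermInner_self, hwc c hc, hwv]

/-- if `n ≡ 0, 4 (mod 5)`, there is no quaternary Hermitian LCD
`[n, 2, ⌊4n/5⌋]` code. -/
theorem stmt2 (n : ℕ) (hn : 1 ≤ n) (h : n % 5 = 0 ∨ n % 5 = 4) :
    ¬ ∃ C : Submodule F4 (Fin n → F4), IsHermLCDCode n 2 (4 * n / 5) C :=
  stmt2_general n h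
end

section
/- For every integer n ≥ 3: if n ≡ 1, 2 or 3 (mod 5) then d₄(n,2) = ⌊4n/5⌋, and if n ≡ 0 or 4 (mod 5) then d₄(n,2) = ⌊4n/5⌋ − 1. That is, in the first case there exists a quaternary Hermitian LCD [n,2] code of minimum weight ⌊4n/5⌋ and every quaternary Hermitian LCD [n,2] code has minimum weight at most ⌊4n/5⌋, and in the second case the same holds with ⌊4n/5⌋ − 1 in place of ⌊4n/5⌋. -/
open scoped Classical

noncomputable section Aux

namespace Stmt3Aux

noncomputable instance : Fintype F4 := Fintype.ofFinite F4

lemma cardF4 : Fintype.card F4 = 4 := by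
  have := GaloisField.card 2 2 (by norm_num); simpa [Nat.card_eq_fintype_card] using this

lemma two_zero : (2 : F4) = 0 := by exact_mod_cast CharP.cast_eq_zero F4 2

lemma pow4 (x : F4) : x ^ 4 = x := by simpa [cardF4] using FiniteField.pow_card x

lemma cube (x : F4) (h : x ≠ 0) : x ^ 3 = 1 := by
  simpa [cardF4] using FiniteField.pow_card_sub_one_eq_one x h

lemma exists_omega : ∃ ω : F4, ω ≠ 0 ∧ ω ≠ 1 ∧ ω ^ 2 + ω + 1 = 0 := by
  have : ∃ ω : F4, ω ∉ ({0, 1} : Finset F4) := by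
    by_contra h
    push_neg at h
    have hsub : (Finset.univ : Finset F4) ⊆ {0,1} := fun x _ => h x
    have h1 := Finset.card_le_card hsub
    have h2 : ({0,1} : Finset F4).card ≤ 2 := (Finset.card_insert_le _ _).trans (by simp)
    rw [Finset.card_univ, cardF4] at h1
    omega
  obtain ⟨ω, hω⟩ := this
  simp at hω
  refine ⟨ω, hω.1, hω.2, ?_⟩
  have h3 : ω ^ 3 = 1 := cube ω hω.1
  have : (ω - 1) * (ω^2 + ω + 1) = 0 := by linear_combination h3
  rcases mul_eq_zero.mp this with h | h
  · exact absurd (by linear_combination h) hω.2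
  · exact h

lemma natCast_sq (k : ℕ) : ((k:F4))^2 = (k:F4) := by
  have h : (k : F4) = ((k % 2 : ℕ) : F4) := by
    conv_lhs => rw [← Nat.mod_add_div k 2]
    push_cast [two_zero]
    ring
  rw [h]
  have : k % 2 = 0 ∨ k % 2 = 1 := by omega
  rcases this with h' | h' <;> simp [h']

variable {n : ℕ}

lemma hermInner_self (x : Fin n → F4) : hermInner x x = (wt x : F4) := by
  unfold hermInner wt
  rw [Finset.card_filter]
  push_cast
  apply Finset.sum_congr rfl
  intro i _
  by_cases h : x i = 0
  · simp [h]
  · rw [if_pos h, ← pow_succ']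
    exact cube _ h

lemma hermInner_conj (x y : Fin n → F4) : hermInner y x = (hermInner x y)^2 := by
  unfold hermInner
  rw [sum_pow_char]
  apply Finset.sum_congr rfl
  intro i _
  have : (x i * y i ^2)^2 = x i ^2 * (y i)^4 := by ring
  rw [this, pow4]
  ring

lemma hermInner_add_left (x y z : Fin n → F4) :
    hermInner (x + y) z = hermInner x z + hermInner y z := by
  unfold hermInner
  rw [← Finset.sum_add_distrib]
  apply Finset.sum_congr rfl; intro i _; simp [add_mul]

lemma hermInner_smul_left (c : F4) (x z : Fin n → F4) :
    hermInner (c • x) z = c * hermInner x z := by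
  unfold hermInner
  rw [Finset.mul_sum]
  apply Finset.sum_congr rfl; intro i _; simp; ring

lemma hermInner_smul_right (c : F4) (x z : Fin n → F4) :
    hermInner x (c • z) = c^2 * hermInner x z := by
  unfold hermInner
  rw [Finset.mul_sum]
  apply Finset.sum_congr rfl; intro i _; simp; ring

lemma hermInner_add_right (x y z : Fin n → F4) :
    hermInner x (y + z) = hermInner x y + hermInner x z := by
  unfold hermInner
  rw [← Finset.sum_add_distrib]
  apply Finset.sum_congr rfl; intro i _
  have : (y i + z i)^2 = y i ^2 + z i ^2 := add_pow_char _ _ _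
  simp [this, mul_add]

lemma wt_smul (c : F4) (hc : c ≠ 0) (x : Fin n → F4) : wt (c • x) = wt x := by
  unfold wt
  congr 1
  apply Finset.filter_congr
  intro i _
  simp [hc]

lemma finrank_span_pair {V : Type} [AddCommGroup V] [Module F4 V] {u v : V}
    (h : ∀ a b : F4, a • u + b • v = 0 → a = 0 ∧ b = 0) :
    Module.finrank F4 (Submodule.span F4 ({u, v} : Set V)) = 2 := by
  have hli : LinearIndependent F4 ![u, v] := by
    rw [Fintype.linearIndependent_iff]
    intro g hg i
    have := h (g 0) (g 1) (by simpa [Fin.sum_univ_two] using hg)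
    fin_cases i
    · exact this.1
    · exact this.2
  have := finrank_span_eq_card hli
  have hrange : Set.range ![u, v] = {u, v} := by
    ext w; simp [Fin.exists_fin_two]; tauto
  rw [hrange] at this
  simpa using this

variable (ω : F4) (b1 b2 b3 b4 b5 : ℕ)

def Uf (j : ℕ) : F4 := if j < b1 then 1 else if j < b1+b2 then 0 else 1
def Vf (j : ℕ) : F4 :=
  if j < b1 then 0 else if j < b1+b2 then 1 else if j < b1+b2+b3 then 1
  else if j < b1+b2+b3+b4 then ω else ω^2

lemma master {M : Type} [AddCommMonoid M] (g : F4 → F4 → M) :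
    ∑ j ∈ Finset.range (b1+b2+b3+b4+b5), g (Uf b1 b2 j) (Vf ω b1 b2 b3 b4 j)
      = b1 • g 1 0 + b2 • g 0 1 + b3 • g 1 1 + b4 • g 1 ω + b5 • g 1 (ω^2) := by
  have e1 : ∑ j ∈ Finset.range b1, g (Uf b1 b2 j) (Vf ω b1 b2 b3 b4 j) = b1 • g 1 0 := by
    refine (Finset.sum_congr rfl (fun j hj => ?_)).trans
      (by rw [Finset.sum_const, Finset.card_range])
    rw [Finset.mem_range] at hj
    have hu : Uf b1 b2 j = 1 := by unfold Uf; rw [if_pos hj]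
    have hv : Vf ω b1 b2 b3 b4 j = 0 := by unfold Vf; rw [if_pos hj]
    rw [hu, hv]
  have e2 : ∑ j ∈ Finset.range b2, g (Uf b1 b2 (b1 + j)) (Vf ω b1 b2 b3 b4 (b1 + j)) = b2 • g 0 1 := by
    refine (Finset.sum_congr rfl (fun j hj => ?_)).trans
      (by rw [Finset.sum_const, Finset.card_range])
    rw [Finset.mem_range] at hj
    have hu : Uf b1 b2 (b1 + j) = 0 := by
      unfold Uf; rw [if_neg (by omega), if_pos (by omega)]
    have hv : Vf ω b1 b2 b3 b4 (b1 + j) = 1 := by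
      unfold Vf; rw [if_neg (by omega), if_pos (by omega)]
    rw [hu, hv]
  have e3 : ∑ j ∈ Finset.range b3, g (Uf b1 b2 (b1 + b2 + j)) (Vf ω b1 b2 b3 b4 (b1 + b2 + j)) = b3 • g 1 1 := by
    refine (Finset.sum_congr rfl (fun j hj => ?_)).trans
      (by rw [Finset.sum_const, Finset.card_range])
    rw [Finset.mem_range] at hj
    have hu : Uf b1 b2 (b1 + b2 + j) = 1 := by
      unfold Uf; rw [if_neg (by omega), if_neg (by omega)]
    have hv : Vf ω b1 b2 b3 b4 (b1 + b2 + j) = 1 := by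
      unfold Vf; rw [if_neg (by omega), if_neg (by omega), if_pos (by omega)]
    rw [hu, hv]
  have e4 : ∑ j ∈ Finset.range b4, g (Uf b1 b2 (b1 + b2 + b3 + j)) (Vf ω b1 b2 b3 b4 (b1 + b2 + b3 + j)) = b4 • g 1 ω := by
    refine (Finset.sum_congr rfl (fun j hj => ?_)).trans
      (by rw [Finset.sum_const, Finset.card_range])
    rw [Finset.mem_range] at hj
    have hu : Uf b1 b2 (b1 + b2 + b3 + j) = 1 := by
      unfold Uf; rw [if_neg (by omega), if_neg (by omega)]
    have hv : Vf ω b1 b2 b3 b4 (b1 + b2 + b3 + j) = ω := by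
      unfold Vf; rw [if_neg (by omega), if_neg (by omega), if_neg (by omega), if_pos (by omega)]
    rw [hu, hv]
  have e5 : ∑ j ∈ Finset.range b5, g (Uf b1 b2 (b1 + b2 + b3 + b4 + j)) (Vf ω b1 b2 b3 b4 (b1 + b2 + b3 + b4 + j)) = b5 • g 1 (ω^2) := by
    refine (Finset.sum_congr rfl (fun j hj => ?_)).trans
      (by rw [Finset.sum_const, Finset.card_range])
    rw [Finset.mem_range] at hj
    have hu : Uf b1 b2 (b1 + b2 + b3 + b4 + j) = 1 := by
      unfold Uf; rw [if_neg (by omega), if_neg (by omega)]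
    have hv : Vf ω b1 b2 b3 b4 (b1 + b2 + b3 + b4 + j) = ω^2 := by
      unfold Vf; rw [if_neg (by omega), if_neg (by omega), if_neg (by omega), if_neg (by omega)]
    rw [hu, hv]
  rw [Finset.sum_range_add, Finset.sum_range_add, Finset.sum_range_add, Finset.sum_range_add,
    e1, e2, e3, e4, e5]

end Stmt3Aux

end Aux

noncomputable section
namespace Stmt3Aux

lemma construction (n b1 b2 b3 b4 b5 : ℕ) (hsum : n = b1+b2+b3+b4+b5)
    (hb2 : 1 ≤ b2) (h21 : b2 ≤ b1) (h31 : b3 ≤ b1) (h41 : b4 ≤ b1) (h51 : b5 ≤ b1)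
    (ω : F4) (hω0 : ω ≠ 0) (hω1 : ω ≠ 1) (hωq : ω^2+ω+1 = 0)
    (hreg : ∀ a b : F4,
      a * ((b1:F4) + b3 + b4 + b5) + b * ((b3:F4) + b4*ω + b5*ω^2) = 0 →
      a * ((b3:F4) + b4*ω^2 + b5*ω) + b * ((b2:F4) + b3 + b4 + b5) = 0 →
      a = 0 ∧ b = 0) :
    ∃ C : Submodule F4 (Fin n → F4), IsHermLCDCode n 2 (n - b1) C := by
  have hω3 : ω^3 = 1 := cube ω hω0
  have hω20 : ω^2 ≠ 0 := pow_ne_zero _ hω0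
  subst hsum
  set N := b1+b2+b3+b4+b5 with hN
  set u : Fin N → F4 := fun j => Uf b1 b2 j.val with hu
  set v : Fin N → F4 := fun j => Vf ω b1 b2 b3 b4 j.val with hv
  have masterFin : ∀ {M : Type} [AddCommMonoid M] (g : F4 → F4 → M),
      ∑ j : Fin N, g (u j) (v j)
        = b1 • g 1 0 + b2 • g 0 1 + b3 • g 1 1 + b4 • g 1 ω + b5 • g 1 (ω^2) := by
    intro M _ g
    rw [← master ω b1 b2 b3 b4 b5 g]
    exact Fin.sum_univ_eq_sum_range (fun j => g (Uf b1 b2 j) (Vf ω b1 b2 b3 b4 j)) N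
  -- Gram entries
  have gUU : hermInner u u = (b1:F4) + b3 + b4 + b5 := by
    have := masterFin (fun x y => x * x^2)
    unfold hermInner
    rw [this]
    simp [nsmul_eq_mul]
    try ring
  have gVU : hermInner v u = (b3:F4) + b4*ω + b5*ω^2 := by
    have := masterFin (fun x y => y * x^2)
    unfold hermInner
    rw [this]
    simp [nsmul_eq_mul]
    try ring
  have gUV : hermInner u v = (b3:F4) + b4*ω^2 + b5*ω := by
    have := masterFin (fun x y => x * y^2)
    unfold hermInner
    rw [this]
    have : (ω^2)^2 = ω := by rw [← pow_mul]; simpa using pow4 ω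
    simp [nsmul_eq_mul, this]
    try ring
  have gVV : hermInner v v = (b2:F4) + b3 + b4 + b5 := by
    have := masterFin (fun x y => y * y^2)
    unfold hermInner
    rw [this]
    have h6 : ω^2 * (ω^2)^2 = 1 := by
      have : ω^2 * (ω^2)^2 = (ω^3)^2 := by ring
      rw [this, hω3]; ring
    simp only [nsmul_eq_mul, one_mul, mul_one, one_pow, zero_mul, mul_zero, add_zero, zero_add]
    rw [show ω * ω^2 = 1 from by rw [← pow_succ']; exact hω3, h6]
    ring
  -- coordinates witnessing independence
  have hNb1 : b1 < N := by omega
  have hN0 : 0 < N := by omega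
  have hu0 : u ⟨0, hN0⟩ = 1 := by
    show Uf b1 b2 0 = 1
    unfold Uf; rw [if_pos (by omega)]
  have hv0 : v ⟨0, hN0⟩ = 0 := by
    show Vf ω b1 b2 b3 b4 0 = 0
    unfold Vf; rw [if_pos (by omega)]
  have hub1 : u ⟨b1, hNb1⟩ = 0 := by
    show Uf b1 b2 b1 = 0
    unfold Uf; rw [if_neg (by omega), if_pos (by omega)]
  have hvb1 : v ⟨b1, hNb1⟩ = 1 := by
    show Vf ω b1 b2 b3 b4 b1 = 1
    unfold Vf; rw [if_neg (by omega), if_pos (by omega)]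
  have hindep : ∀ a b : F4, a • u + b • v = 0 → a = 0 ∧ b = 0 := by
    intro a b h
    have h1 := congrFun h ⟨0, hN0⟩
    have h2 := congrFun h ⟨b1, hNb1⟩
    simp [hu0, hv0, hub1, hvb1] at h1 h2
    exact ⟨h1, h2⟩
  refine ⟨Submodule.span F4 ({u, v} : Set (Fin N → F4)), ?_, ?_, ?_⟩
  · exact finrank_span_pair hindep
  · -- LCD
    intro x hx hdual
    obtain ⟨a, b, rfl⟩ := Submodule.mem_span_pair.mp hx
    have humem : u ∈ Submodule.span F4 ({u, v} : Set (Fin N → F4)) :=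
      Submodule.subset_span (by simp)
    have hvmem : v ∈ Submodule.span F4 ({u, v} : Set (Fin N → F4)) :=
      Submodule.subset_span (by simp)
    have e1 : a * hermInner u u + b * hermInner v u = 0 := by
      have := hdual u humem
      rwa [hermInner_add_left, hermInner_smul_left, hermInner_smul_left] at this
    have e2 : a * hermInner u v + b * hermInner v v = 0 := by
      have := hdual v hvmem
      rwa [hermInner_add_left, hermInner_smul_left, hermInner_smul_left] at this
    rw [gUU, gVU] at e1
    rw [gUV, gVV] at e2
    obtain ⟨ha, hb⟩ := hreg a b e1 e2
    rw [ha, hb]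
    simp
  · -- min weight
    have wt_eq : ∀ a b : F4, wt (a • u + b • v) =
        b1 • (if a ≠ 0 then 1 else 0) + b2 • (if b ≠ 0 then 1 else 0)
        + b3 • (if a + b ≠ 0 then 1 else 0) + b4 • (if a + b*ω ≠ 0 then 1 else 0)
        + b5 • (if a + b*ω^2 ≠ 0 then 1 else 0) := by
      intro a b
      unfold wt
      rw [Finset.card_filter]
      have := masterFin (fun x y => if a * x + b * y ≠ 0 then 1 else 0)
      simp only [Pi.add_apply, Pi.smul_apply, smul_eq_mul]
      rw [this]
      simp only [mul_one, mul_zero, add_zero, zero_add, smul_eq_mul]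
    constructor
    · -- the word v has weight N - b1
      refine ⟨v, Submodule.subset_span (by simp), ?_, ?_⟩
      · intro h
        have := congrFun h ⟨b1, hNb1⟩
        rw [hvb1] at this
        simp at this
      · have : v = (0:F4) • u + (1:F4) • v := by simp
        rw [this, wt_eq]
        have i1 : (if (0:F4) ≠ 0 then 1 else 0) = 0 := by simp
        have i2 : (if (1:F4) ≠ 0 then 1 else 0) = 1 := by simp
        have i3 : (if (0:F4) + 1 ≠ 0 then 1 else 0) = 1 := by simp
        have i4 : (if (0:F4) + 1*ω ≠ 0 then 1 else 0) = 1 := by simp [hω0]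
        have i5 : (if (0:F4) + 1*ω^2 ≠ 0 then 1 else 0) = 1 := by simp [hω0]
        rw [i1, i2, i3, i4, i5]
        simp
        omega
    · intro x hx hx0
      obtain ⟨a, b, rfl⟩ := Submodule.mem_span_pair.mp hx
      rw [wt_eq]
      by_cases ha : a = 0
      · have hb : b ≠ 0 := by
          intro hb; apply hx0; rw [ha, hb]; simp
        have c3 : a + b ≠ 0 := by rw [ha]; simpa using hb
        have c4 : a + b*ω ≠ 0 := by
          rw [ha, zero_add]; exact mul_ne_zero hb hω0
        have c5 : a + b*ω^2 ≠ 0 := by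
          rw [ha, zero_add]; exact mul_ne_zero hb hω20
        simp [ha, hb, c3, c4, c5, hω0, hω20]
        try omega
      · by_cases hb : b = 0
        · have c3 : a + b ≠ 0 := by rw [hb]; simpa using ha
          have c4 : a + b*ω ≠ 0 := by rw [hb]; simpa using ha
          have c5 : a + b*ω^2 ≠ 0 := by rw [hb]; simpa using ha
          simp [ha, hb, c3, c4, c5, hω0, hω20]
          try omega
        · by_cases h3 : a + b = 0
          · have c4 : a + b*ω ≠ 0 := by
              intro h
              have : b*(ω - 1) = 0 := by linear_combination h - h3
              rcases mul_eq_zero.mp this with h' | h'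
              · exact hb h'
              · exact hω1 (by linear_combination h')
            have c5 : a + b*ω^2 ≠ 0 := by
              intro h
              have : b*(ω^2 - 1) = 0 := by linear_combination h - h3
              rcases mul_eq_zero.mp this with h' | h'
              · exact hb h'
              · -- ω^2 = 1 → ω = 1 (cube root); (ω-1)(ω+1)=0, char 2: ω=1 or ω=-1=1
                have : (ω - 1) * (ω + 1) = 0 := by linear_combination h'
                rcases mul_eq_zero.mp this with h'' | h''
                · exact hω1 (by linear_combination h'')
                · exact hω1 (by linear_combination h'' - two_zero)
            simp [ha, hb, h3, c4, c5, hω0, hω20]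
            try omega
          · by_cases h4 : a + b*ω = 0
            · have c5 : a + b*ω^2 ≠ 0 := by
                intro h
                have : b*ω*(ω - 1) = 0 := by linear_combination h - h4
                rcases mul_eq_zero.mp this with h' | h'
                · rcases mul_eq_zero.mp h' with h'' | h''
                  · exact hb h''
                  · exact hω0 h''
                · exact hω1 (by linear_combination h')
              simp [ha, hb, h3, h4, c5, hω0, hω20]
              try omega
            · by_cases h5 : a + b*ω^2 = 0
              · simp [ha, hb, h3, h4, h5, hω0, hω20]
                try omega
              · simp [ha, hb, h3, h4, h5, hω0, hω20]
                try omega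

end Stmt3Aux

end

noncomputable section
namespace Stmt3Aux

lemma exists_code_r0 (m : ℕ) (hm : 1 ≤ m) :
    ∃ C : Submodule F4 (Fin (5*m) → F4), IsHermLCDCode (5*m) 2 (4*m - 1) C := by
  obtain ⟨ω, hω0, hω1, hωq⟩ := exists_omega
  have hω20 : ω^2 ≠ 0 := pow_ne_zero _ hω0
  rw [show 4*m - 1 = 5*m - (m+1) from by omega]
  refine construction (5*m) (m+1) m m m (m-1) (by omega) (by omega) (by omega) (by omega)
    (by omega) (by omega) ω hω0 hω1 hωq ?_
  intro a b e1 e2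
  rw [Nat.cast_sub hm] at e1 e2
  push_cast at e1 e2
  have hb : b = 0 := by
    have e1' : b * ω^2 = 0 := by
      linear_combination e1 - b*(m:F4)*hωq + (b*ω^2 - 2*a*(m:F4))*two_zero
    rcases mul_eq_zero.mp e1' with h | h
    · exact h
    · exact absurd h hω20
  rw [hb] at e2
  have ha : a = 0 := by
    have e2' : a * ω = 0 := by
      linear_combination e2 - a*(m:F4)*hωq + a*ω*two_zero
    rcases mul_eq_zero.mp e2' with h | h
    · exact h
    · exact absurd h hω0
  exact ⟨ha, hb⟩

lemma exists_code_r1 (m : ℕ) (hm : 1 ≤ m) :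
    ∃ C : Submodule F4 (Fin (5*m+1) → F4), IsHermLCDCode (5*m+1) 2 (4*m) C := by
  obtain ⟨ω, hω0, hω1, hωq⟩ := exists_omega
  have hω20 : ω^2 ≠ 0 := pow_ne_zero _ hω0
  rw [show 4*m = 5*m+1 - (m+1) from by omega]
  refine construction (5*m+1) (m+1) (m+1) m m (m-1) (by omega) (by omega) (by omega)
    (by omega) (by omega) (by omega) ω hω0 hω1 hωq ?_
  intro a b e1 e2
  rw [Nat.cast_sub hm] at e1 e2
  push_cast at e1 e2
  have hb : b = 0 := by
    have e1' : b * ω^2 = 0 := by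
      linear_combination e1 - b*(m:F4)*hωq + (b*ω^2 - 2*a*(m:F4))*two_zero
    rcases mul_eq_zero.mp e1' with h | h
    · exact h
    · exact absurd h hω20
  rw [hb] at e2
  have ha : a = 0 := by
    have e2' : a * ω = 0 := by
      linear_combination e2 - a*(m:F4)*hωq + a*ω*two_zero
    rcases mul_eq_zero.mp e2' with h | h
    · exact h
    · exact absurd h hω0
  exact ⟨ha, hb⟩

lemma exists_code_r2 (m : ℕ) :
    ∃ C : Submodule F4 (Fin (5*m+2) → F4), IsHermLCDCode (5*m+2) 2 (4*m+1) C := by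
  obtain ⟨ω, hω0, hω1, hωq⟩ := exists_omega
  rw [show 4*m+1 = 5*m+2 - (m+1) from by omega]
  refine construction (5*m+2) (m+1) (m+1) m m m (by omega) (by omega) (by omega)
    (by omega) (by omega) (by omega) ω hω0 hω1 hωq ?_
  intro a b e1 e2
  push_cast at e1 e2
  have ha : a = 0 := by
    linear_combination e1 - b*(m:F4)*hωq - 2*a*(m:F4)*two_zero
  rw [ha] at e2
  have hb : b = 0 := by
    linear_combination e2 - 2*b*(m:F4)*two_zero
  exact ⟨ha, hb⟩

lemma exists_code_r3 (m : ℕ) :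
    ∃ C : Submodule F4 (Fin (5*m+3) → F4), IsHermLCDCode (5*m+3) 2 (4*m+2) C := by
  obtain ⟨ω, hω0, hω1, hωq⟩ := exists_omega
  rw [show 4*m+2 = 5*m+3 - (m+1) from by omega]
  refine construction (5*m+3) (m+1) (m+1) (m+1) m m (by omega) (by omega) (by omega)
    (by omega) (by omega) (by omega) ω hω0 hω1 hωq ?_
  intro a b e1 e2
  push_cast at e1 e2
  have hb : b = 0 := by
    linear_combination e1 - b*(m:F4)*hωq - (2*a*(m:F4)+a)*two_zero
  rw [hb] at e2
  have ha : a = 0 := by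
    linear_combination e2 - a*(m:F4)*hωq
  exact ⟨ha, hb⟩

lemma exists_code_r4 (m : ℕ) :
    ∃ C : Submodule F4 (Fin (5*m+4) → F4), IsHermLCDCode (5*m+4) 2 (4*m+2) C := by
  obtain ⟨ω, hω0, hω1, hωq⟩ := exists_omega
  rw [show 4*m+2 = 5*m+4 - (m+2) from by omega]
  refine construction (5*m+4) (m+2) (m+1) (m+1) m m (by omega) (by omega) (by omega)
    (by omega) (by omega) (by omega) ω hω0 hω1 hωq ?_
  intro a b e1 e2
  push_cast at e1 e2
  have ha : a = 0 := by
    linear_combination e2 - a*(m:F4)*hωq - (2*b*(m:F4)+b)*two_zero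
  rw [ha] at e1
  have hb : b = 0 := by
    linear_combination e1 - b*(m:F4)*hωq
  exact ⟨ha, hb⟩

end Stmt3Aux

end

noncomputable section
namespace Stmt3Aux

lemma cardF4sq : Fintype.card (F4 × F4) = 16 := by
  rw [Fintype.card_prod, cardF4]

lemma ker_card (s t : F4) (h : ¬(s = 0 ∧ t = 0)) :
    (Finset.univ.filter (fun p : F4 × F4 => p.1 * s + p.2 * t = 0)).card = 4 := by
  rw [← cardF4, ← Finset.card_univ]
  by_cases hs : s = 0
  · have ht : t ≠ 0 := fun ht => h ⟨hs, ht⟩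
    refine Finset.card_bij' (fun p _ => p.1) (fun b _ => ((b, 0) : F4 × F4))
      (fun p _ => Finset.mem_univ _) ?_ ?_ ?_
    · intro b _
      simp [hs]
    · intro p hp
      simp only [Finset.mem_filter, Finset.mem_univ, true_and, hs, mul_zero, zero_add] at hp
      have h2 : p.2 = 0 := by
        rcases mul_eq_zero.mp hp with h' | h'
        · exact h'
        · exact absurd h' ht
      exact Prod.ext rfl h2.symm
    · intro b _; rfl
  · refine Finset.card_bij' (fun p _ => p.2) (fun b _ => ((b * t * s⁻¹, b) : F4 × F4))
      (fun p _ => Finset.mem_univ _) ?_ ?_ ?_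
    · intro b _
      simp only [Finset.mem_filter, Finset.mem_univ, true_and]
      field_simp
      linear_combination b*t*two_zero
    · intro p hp
      simp only [Finset.mem_filter, Finset.mem_univ, true_and] at hp
      have h1 : p.1 = p.2 * t * s⁻¹ := by
        field_simp
        linear_combination hp - p.2*t*two_zero
      exact Prod.ext h1.symm rfl
    · intro b _; rfl

lemma count_ne (s t : F4) (h : ¬(s = 0 ∧ t = 0)) :
    (Finset.univ.filter (fun p : F4 × F4 => p.1 * s + p.2 * t ≠ 0)).card = 12 := by
  have h1 := Finset.card_filter_add_card_filter_not
    (s := (Finset.univ : Finset (F4 × F4))) (p := fun p : F4 × F4 => p.1 * s + p.2 * t = 0)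
  have h2 := ker_card s t h
  have h3 : (Finset.univ : Finset (F4 × F4)).card = 16 := by
    rw [Finset.card_univ, cardF4sq]
  have : (Finset.univ.filter (fun p : F4 × F4 => ¬(p.1 * s + p.2 * t = 0))).card = 12 := by
    omega
  convert this using 2
lemma count_zero :
    (Finset.univ.filter (fun p : F4 × F4 => p.1 * (0:F4) + p.2 * (0:F4) ≠ 0)).card = 0 := by
  simp

variable {n : ℕ}

lemma total_wt (u v : Fin n → F4) :
    ∑ p : F4 × F4, wt (p.1 • u + p.2 • v)
      = ∑ j : Fin n, (Finset.univ.filter (fun p : F4 × F4 => p.1 * u j + p.2 * v j ≠ 0)).card := by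
  have : ∀ p : F4 × F4, wt (p.1 • u + p.2 • v)
      = ∑ j : Fin n, if p.1 * u j + p.2 * v j ≠ 0 then 1 else 0 := by
    intro p
    unfold wt
    rw [Finset.card_filter]
    apply Finset.sum_congr rfl
    intro j _
    simp
  rw [Finset.sum_congr rfl (fun p _ => this p), Finset.sum_comm]
  apply Finset.sum_congr rfl
  intro j _
  rw [Finset.card_filter]

lemma herm_expand (x y : Fin n → F4) (α : F4) :
    hermInner (x + α • y) (x + α • y)
      = hermInner x x + α^2 * hermInner x y + α * (hermInner x y)^2
        + α^3 * hermInner y y := by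
  rw [hermInner_add_left, hermInner_add_right, hermInner_add_right,
    hermInner_smul_left, hermInner_smul_left, hermInner_smul_right, hermInner_smul_right,
    hermInner_conj x y]
  ring

lemma cast_even (k : ℕ) (h : k % 2 = 0) : (k : F4) = 0 := by
  conv_lhs => rw [← Nat.mod_add_div k 2]
  push_cast [h, two_zero]
  ring
lemma cast_odd (k : ℕ) (h : k % 2 = 1) : (k : F4) = 1 := by
  conv_lhs => rw [← Nat.mod_add_div k 2]
  push_cast [h, two_zero]
  ring

lemma basis_setup (C : Submodule F4 (Fin n → F4)) (hC : Module.finrank F4 C = 2) :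
    ∃ u v : Fin n → F4, u ∈ C ∧ v ∈ C ∧
      (∀ a b : F4, a • u + b • v = 0 → a = 0 ∧ b = 0) ∧
      (∀ x ∈ C, ∃ a b : F4, x = a • u + b • v) := by
  have : Module.Finite F4 C := by
    infer_instance
  let B := Module.finBasisOfFinrankEq F4 C hC
  refine ⟨(B 0 : Fin n → F4), (B 1 : Fin n → F4), (B 0).2, (B 1).2, ?_, ?_⟩
  · intro a b hab
    have h0 : a • B 0 + b • B 1 = (0 : C) := by
      apply Subtype.ext
      push_cast
      exact hab
    have := Fintype.linearIndependent_iff.mp B.linearIndependent ![a, b]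
      (by simpa [Fin.sum_univ_two] using h0)
    exact ⟨this 0, this 1⟩
  · intro x hx
    refine ⟨B.repr ⟨x, hx⟩ 0, B.repr ⟨x, hx⟩ 1, ?_⟩
    have := B.sum_repr ⟨x, hx⟩
    rw [Fin.sum_univ_two] at this
    have := congrArg (Subtype.val) this
    push_cast at this
    exact this.symm

end Stmt3Aux

end

noncomputable section
namespace Stmt3Aux

variable {n : ℕ}

/-- The punctured set of pairs. -/
def S4 : Finset (F4 × F4) := Finset.univ.erase 0

lemma cardS4 : S4.card = 15 := by
  unfold S4
  rw [Finset.card_erase_of_mem (Finset.mem_univ _), Finset.card_univ, cardF4sq]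

lemma total_le (u v : Fin n → F4) :
    ∑ p ∈ S4, wt (p.1 • u + p.2 • v) ≤ 12 * n := by
  have h1 : ∑ p ∈ S4, wt (p.1 • u + p.2 • v) ≤ ∑ p : F4 × F4, wt (p.1 • u + p.2 • v) :=
    Finset.sum_le_sum_of_subset (Finset.erase_subset _ _)
  rw [total_wt] at h1
  have h2 : ∀ j : Fin n,
      (Finset.univ.filter (fun p : F4 × F4 => p.1 * u j + p.2 * v j ≠ 0)).card ≤ 12 := by
    intro j
    by_cases h : u j = 0 ∧ v j = 0
    · rw [h.1, h.2]
      rw [count_zero]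
      omega
    · rw [count_ne _ _ h]
  calc ∑ p ∈ S4, wt (p.1 • u + p.2 • v)
      ≤ ∑ j : Fin n, (Finset.univ.filter (fun p : F4 × F4 => p.1 * u j + p.2 * v j ≠ 0)).card := h1
    _ ≤ ∑ j : Fin n, 12 := Finset.sum_le_sum (fun j _ => h2 j)
    _ = 12 * n := by simp [Finset.sum_const, mul_comm]

lemma ub_generic (C : Submodule F4 (Fin n → F4)) (hC : Module.finrank F4 C = 2) :
    ∃ x ∈ C, x ≠ 0 ∧ wt x ≤ 4 * n / 5 := by
  obtain ⟨u, v, hu, hv, hind, hrep⟩ := basis_setup C hC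
  by_contra hcon
  push_neg at hcon
  have hgt : ∀ p ∈ S4, 4 * n / 5 + 1 ≤ wt (p.1 • u + p.2 • v) := by
    intro p hp
    have hp0 : p ≠ 0 := (Finset.mem_erase.mp hp).1
    have hmem : p.1 • u + p.2 • v ∈ C := C.add_mem (C.smul_mem _ hu) (C.smul_mem _ hv)
    have hne : p.1 • u + p.2 • v ≠ 0 := by
      intro h
      obtain ⟨h1, h2⟩ := hind _ _ h
      exact hp0 (Prod.ext h1 h2)
    have := hcon _ hmem hne
    omega
  have hlow : 15 * (4 * n / 5 + 1) ≤ ∑ p ∈ S4, wt (p.1 • u + p.2 • v) := by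
    calc 15 * (4 * n / 5 + 1) = S4.card * (4 * n / 5 + 1) := by rw [cardS4]
    _ ≤ ∑ p ∈ S4, wt (p.1 • u + p.2 • v) := Finset.card_nsmul_le_sum S4 _ _ hgt
  have hhigh := total_le u v
  omega

end Stmt3Aux

end

noncomputable section
namespace Stmt3Aux

variable {n : ℕ}

lemma hermInner_zero_left (y : Fin n → F4) : hermInner 0 y = 0 := by
  unfold hermInner; simp

lemma beta_zero (ω β : F4) (hω0 : ω ≠ 0) (hωq : ω^2 + ω + 1 = 0)
    (h1 : β + β^2 = 0) (h2 : ω^2*β + ω*β^2 = 0) : β = 0 := by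
  have hβ2 : β^2 = β := by linear_combination h1 - β*two_zero
  linear_combination h2 - ω*hβ2 - β*hωq + β*two_zero

lemma ub_mod0 (hn5 : n % 5 = 0) (hn : 3 ≤ n) (C : Submodule F4 (Fin n → F4))
    (hC : Module.finrank F4 C = 2) (hlcd : IsHermLCD C) :
    ∃ x ∈ C, x ≠ 0 ∧ wt x ≤ 4 * n / 5 - 1 := by
  obtain ⟨ω, hω0, hω1, hωq⟩ := exists_omega
  set m := n / 5 with hm
  have hnm : n = 5 * m := by omega
  have hm1 : 1 ≤ m := by omega
  obtain ⟨u, v, hu, hv, hind, hrep⟩ := basis_setup C hC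
  by_contra hcon
  push_neg at hcon
  -- every nonzero codeword has weight ≥ 4m, hence all S4-words have weight exactly 4m
  have hmemne : ∀ p ∈ S4, (p.1 • u + p.2 • v ∈ C) ∧ (p.1 • u + p.2 • v ≠ 0) := by
    intro p hp
    have hp0 : p ≠ 0 := (Finset.mem_erase.mp hp).1
    refine ⟨C.add_mem (C.smul_mem _ hu) (C.smul_mem _ hv), ?_⟩
    intro h
    obtain ⟨h1, h2⟩ := hind _ _ h
    exact hp0 (Prod.ext h1 h2)
  have hge : ∀ p ∈ S4, 4 * m ≤ wt (p.1 • u + p.2 • v) := by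
    intro p hp
    obtain ⟨hmem, hne⟩ := hmemne p hp
    have := hcon _ hmem hne
    omega
  have hT := total_le u v
  have hall : ∀ p ∈ S4, wt (p.1 • u + p.2 • v) = 4 * m := by
    intro p hp
    by_contra hne
    have hlt : ∀ q ∈ S4, 4 * m ≤ wt (q.1 • u + q.2 • v) := hge
    have : ∑ _q ∈ S4, 4 * m < ∑ q ∈ S4, wt (q.1 • u + q.2 • v) :=
      Finset.sum_lt_sum hlt ⟨p, hp, lt_of_le_of_ne (hge p hp) (Ne.symm hne)⟩
    rw [Finset.sum_const, cardS4] at this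
    simp only [smul_eq_mul] at this
    omega
  have hself : ∀ x ∈ C, hermInner x x = 0 := by
    intro x hx
    obtain ⟨a, b, rfl⟩ := hrep x hx
    by_cases hab : (a, b) = (0 : F4 × F4)
    · rw [Prod.mk_eq_zero] at hab
      rw [hab.1, hab.2]
      simp [hermInner_zero_left]
    · have hp : ((a,b) : F4 × F4) ∈ S4 := Finset.mem_erase.mpr ⟨hab, Finset.mem_univ _⟩
      have := hall (a, b) hp
      rw [hermInner_self]
      simp only at this
      rw [this]
      exact cast_even _ (by omega)
  set β := hermInner u v with hβ
  have e1 : β + β^2 = 0 := by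
    have hmem : u + (1:F4) • v ∈ C := C.add_mem hu (C.smul_mem _ hv)
    have := herm_expand u v 1
    rw [hself _ hmem, hself u hu, hself v hv] at this
    linear_combination -this
  have e2 : ω^2*β + ω*β^2 = 0 := by
    have hmem : u + ω • v ∈ C := C.add_mem hu (C.smul_mem _ hv)
    have := herm_expand u v ω
    rw [hself _ hmem, hself u hu, hself v hv] at this
    linear_combination -this
  have hβ0 : β = 0 := beta_zero ω β hω0 hωq e1 e2
  have hdual : inHermDual C u := by
    intro y hy
    obtain ⟨a, b, rfl⟩ := hrep y hy
    rw [hermInner_add_right, hermInner_smul_right, hermInner_smul_right,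
      hself u hu, ← hβ, hβ0]
    ring
  have := hlcd u hu hdual
  have h10 := hind 1 0 (by rw [this]; simp)
  exact one_ne_zero h10.1
end Stmt3Aux

end

noncomputable section
namespace Stmt3Aux

variable {n : ℕ}

lemma wt_zero : wt (0 : Fin n → F4) = 0 := by unfold wt; simp

lemma ub_mod4 (hn5 : n % 5 = 4) (C : Submodule F4 (Fin n → F4))
    (hC : Module.finrank F4 C = 2) (hlcd : IsHermLCD C) :
    ∃ x ∈ C, x ≠ 0 ∧ wt x ≤ 4 * n / 5 - 1 := by
  obtain ⟨ω, hω0, hω1, hωq⟩ := exists_omega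
  have hω3 : ω^3 = 1 := cube ω hω0
  have hω20 : ω^2 ≠ 0 := pow_ne_zero _ hω0
  have hω21 : ω^2 ≠ 1 := by
    intro h
    apply hω1
    calc ω = ω * ω^2 := by rw [h, mul_one]
    _ = ω^3 := by ring
    _ = 1 := hω3
  have hωω2 : ω ≠ ω^2 := by
    intro h
    apply hω1
    have : ω * (ω - 1) = 0 := by linear_combination -h
    rcases mul_eq_zero.mp this with h' | h'
    · exact absurd h' hω0
    · linear_combination h'
  set m := n / 5 with hm
  have hnm : n = 5 * m + 4 := by omega
  obtain ⟨u, v, hu, hv, hind, hrep⟩ := basis_setup C hC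
  by_contra hcon
  push_neg at hcon
  have hmemne : ∀ p : F4 × F4, p ≠ 0 → (p.1 • u + p.2 • v ∈ C) ∧ (p.1 • u + p.2 • v ≠ 0) := by
    intro p hp0
    refine ⟨C.add_mem (C.smul_mem _ hu) (C.smul_mem _ hv), ?_⟩
    intro h
    obtain ⟨h1, h2⟩ := hind _ _ h
    exact hp0 (Prod.ext h1 h2)
  have hge : ∀ p ∈ S4, 4 * m + 3 ≤ wt (p.1 • u + p.2 • v) := by
    intro p hp
    obtain ⟨hmem, hne⟩ := hmemne p (Finset.mem_erase.mp hp).1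
    have := hcon _ hmem hne
    omega
  -- exact total count
  have htot : ∑ p : F4 × F4, wt (p.1 • u + p.2 • v) = ∑ p ∈ S4, wt (p.1 • u + p.2 • v) := by
    rw [← Finset.add_sum_erase _ _ (Finset.mem_univ (0 : F4 × F4))]
    have : wt ((0:F4×F4).1 • u + (0:F4×F4).2 • v) = 0 := by
      simp [wt_zero]
    rw [this, zero_add]
    rfl
  have h12s : ∑ p : F4 × F4, wt (p.1 • u + p.2 • v)
      = 12 * (Finset.univ.filter (fun j : Fin n => ¬(u j = 0 ∧ v j = 0))).card := by
    rw [total_wt]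
    rw [← Finset.sum_filter_add_sum_filter_not Finset.univ (fun j : Fin n => ¬(u j = 0 ∧ v j = 0))]
    have e1 : ∀ j ∈ Finset.univ.filter (fun j : Fin n => ¬(u j = 0 ∧ v j = 0)),
        (Finset.univ.filter (fun p : F4 × F4 => p.1 * u j + p.2 * v j ≠ 0)).card = 12 := by
      intro j hj
      exact count_ne _ _ (Finset.mem_filter.mp hj).2
    have e2 : ∀ j ∈ Finset.univ.filter (fun j : Fin n => ¬¬(u j = 0 ∧ v j = 0)),
        (Finset.univ.filter (fun p : F4 × F4 => p.1 * u j + p.2 * v j ≠ 0)).card = 0 := by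
      intro j hj
      have := (Finset.mem_filter.mp hj).2
      push_neg at this
      rw [this.1, this.2, count_zero]
    rw [Finset.sum_congr rfl e1, Finset.sum_congr rfl e2, Finset.sum_const, Finset.sum_const]
    simp [mul_comm]
  have hsle : (Finset.univ.filter (fun j : Fin n => ¬(u j = 0 ∧ v j = 0))).card ≤ n := by
    calc _ ≤ (Finset.univ : Finset (Fin n)).card := Finset.card_filter_le _ _
    _ = n := by simp
  have hTge : 15 * (4 * m + 3) ≤ ∑ p ∈ S4, wt (p.1 • u + p.2 • v) := by
    calc 15 * (4 * m + 3) = S4.card * (4 * m + 3) := by rw [cardS4]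
    _ ≤ _ := Finset.card_nsmul_le_sum S4 _ _ hge
  have hTval : ∑ p ∈ S4, wt (p.1 • u + p.2 • v) = 60 * m + 48 := by omega
  -- excess sum is 3
  have hE : ∑ p ∈ S4, (wt (p.1 • u + p.2 • v) - (4 * m + 3)) = 3 := by
    have : ∑ p ∈ S4, wt (p.1 • u + p.2 • v)
        = ∑ p ∈ S4, ((wt (p.1 • u + p.2 • v) - (4 * m + 3)) + (4 * m + 3)) := by
      apply Finset.sum_congr rfl
      intro p hp
      have := hge p hp
      omega
    rw [Finset.sum_add_distrib, Finset.sum_const, cardS4, hTval] at this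
    simp only [smul_eq_mul] at this
    omega
  -- there is an even-weight class
  have hex : ∃ p0 ∈ S4, wt (p0.1 • u + p0.2 • v) % 2 = 0 := by
    by_contra h
    push_neg at h
    have hmod : ∀ p ∈ S4, (wt (p.1 • u + p.2 • v) - (4 * m + 3)) % 2 = 0 := by
      intro p hp
      have h1 := hge p hp
      have h2 := h p hp
      omega
    have := Finset.sum_nat_mod S4 2 (fun p => wt (p.1 • u + p.2 • v) - (4 * m + 3))
    rw [hE, Finset.sum_congr rfl hmod] at this
    simp at this
  obtain ⟨p0, hp0S, hp0even⟩ := hex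
  have hp0ne : p0 ≠ 0 := (Finset.mem_erase.mp hp0S).1
  -- the set of even classes has at most 3 elements
  set B := S4.filter (fun p => wt (p.1 • u + p.2 • v) % 2 = 0) with hB
  have hcardB : B.card ≤ 3 := by
    have h1 : B.card ≤ ∑ p ∈ B, (wt (p.1 • u + p.2 • v) - (4 * m + 3)) := by
      rw [Finset.card_eq_sum_ones]
      apply Finset.sum_le_sum
      intro p hp
      obtain ⟨hpS, hpe⟩ := Finset.mem_filter.mp hp
      have := hge p hpS
      omega
    have h2 : ∑ p ∈ B, (wt (p.1 • u + p.2 • v) - (4 * m + 3))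
        ≤ ∑ p ∈ S4, (wt (p.1 • u + p.2 • v) - (4 * m + 3)) :=
      Finset.sum_le_sum_of_subset (Finset.filter_subset _ _)
    omega
  -- scaling invariance
  have hscale : ∀ (c : F4) (p : F4 × F4), (c • p).1 • u + (c • p).2 • v
      = c • (p.1 • u + p.2 • v) := by
    intro c p
    simp [Prod.smul_fst, Prod.smul_snd, smul_eq_mul, mul_smul, smul_add]
  have hBmem : ∀ (c : F4), c ≠ 0 → ∀ p ∈ B, c • p ∈ B := by
    intro c hc p hp
    obtain ⟨hpS, hpe⟩ := Finset.mem_filter.mp hp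
    have hpne : p ≠ 0 := (Finset.mem_erase.mp hpS).1
    refine Finset.mem_filter.mpr ⟨Finset.mem_erase.mpr ⟨?_, Finset.mem_univ _⟩, ?_⟩
    · intro h
      rcases smul_eq_zero.mp h with h' | h'
      · exact hc h'
      · exact hpne h'
    · rw [hscale, wt_smul c hc]
      exact hpe
  have hp0B : p0 ∈ B := Finset.mem_filter.mpr ⟨hp0S, hp0even⟩
  -- uniqueness of the even class up to scalars
  have huniq : ∀ q ∈ S4, wt (q.1 • u + q.2 • v) % 2 = 0 → ∃ c : F4, q = c • p0 := by
    intro q hqS hqe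
    by_contra hnp
    push_neg at hnp
    have hqne : q ≠ 0 := (Finset.mem_erase.mp hqS).1
    have hqB : q ∈ B := Finset.mem_filter.mpr ⟨hqS, hqe⟩
    have hne_p0 : ∀ c d : F4, c ≠ d → c • p0 ≠ d • p0 := by
      intro c d hcd h
      apply hcd
      have : (c - d) • p0 = 0 := by rw [sub_smul, h, sub_self]
      rcases smul_eq_zero.mp this with h' | h'
      · exact sub_eq_zero.mp h'
      · exact absurd h' hp0ne
    have hne_q : ∀ c d : F4, c ≠ d → c • q ≠ d • q := by
      intro c d hcd h
      apply hcd
      have : (c - d) • q = 0 := by rw [sub_smul, h, sub_self]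
      rcases smul_eq_zero.mp this with h' | h'
      · exact sub_eq_zero.mp h'
      · exact absurd h' hqne
    have hcross : ∀ c d : F4, d ≠ 0 → c • p0 ≠ d • q := by
      intro c d hd h
      apply hnp (d⁻¹ * c)
      rw [mul_smul, h, smul_smul, inv_mul_cancel₀ hd, one_smul]
    set F6 : Finset (F4 × F4) :=
      {(1:F4) • p0, ω • p0, ω^2 • p0, (1:F4) • q, ω • q, ω^2 • q} with hF6
    have hsub : F6 ⊆ B := by
      intro x hx
      simp only [hF6, Finset.mem_insert, Finset.mem_singleton] at hx
      rcases hx with rfl|rfl|rfl|rfl|rfl|rfl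
      · exact hBmem 1 one_ne_zero p0 hp0B
      · exact hBmem ω hω0 p0 hp0B
      · exact hBmem _ hω20 p0 hp0B
      · exact hBmem 1 one_ne_zero q hqB
      · exact hBmem ω hω0 q hqB
      · exact hBmem _ hω20 q hqB
    have hc6 : F6.card = 6 := by
      rw [hF6]
      rw [Finset.card_insert_of_notMem (by
        simp only [Finset.mem_insert, Finset.mem_singleton]
        push_neg
        exact ⟨hne_p0 1 ω (Ne.symm hω1), hne_p0 1 (ω^2) (Ne.symm hω21),
          hcross 1 1 one_ne_zero, hcross 1 ω hω0, hcross 1 (ω^2) hω20⟩)]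
      rw [Finset.card_insert_of_notMem (by
        simp only [Finset.mem_insert, Finset.mem_singleton]
        push_neg
        exact ⟨hne_p0 ω (ω^2) hωω2,
          hcross ω 1 one_ne_zero, hcross ω ω hω0, hcross ω (ω^2) hω20⟩)]
      rw [Finset.card_insert_of_notMem (by
        simp only [Finset.mem_insert, Finset.mem_singleton]
        push_neg
        exact ⟨hcross (ω^2) 1 one_ne_zero, hcross (ω^2) ω hω0, hcross (ω^2) (ω^2) hω20⟩)]
      rw [Finset.card_insert_of_notMem (by
        simp only [Finset.mem_insert, Finset.mem_singleton]
        push_neg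
        exact ⟨hne_q 1 ω (Ne.symm hω1), hne_q 1 (ω^2) (Ne.symm hω21)⟩)]
      rw [Finset.card_insert_of_notMem (by
        simp only [Finset.mem_singleton]
        exact hne_q ω (ω^2) hωω2)]
      rw [Finset.card_singleton]
    have := Finset.card_le_card hsub
    omega
  -- the even codeword
  set w := p0.1 • u + p0.2 • v with hw
  have hwC : w ∈ C := (hmemne p0 hp0ne).1
  have hwne : w ≠ 0 := (hmemne p0 hp0ne).2
  have hww : hermInner w w = 0 := by
    rw [hermInner_self]
    exact cast_even _ hp0even
  -- key step: w is orthogonal to every codeword not in its span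
  have key : ∀ p1 : F4 × F4, p1 ≠ 0 → (∀ c : F4, p1 ≠ c • p0) →
      hermInner w (p1.1 • u + p1.2 • v) = 0 := by
    intro p1 h1 h2
    set u' := p1.1 • u + p1.2 • v with hu'
    have hodd : ∀ α : F4, wt ((p1 + α • p0).1 • u + (p1 + α • p0).2 • v) % 2 = 1 := by
      intro α
      have hqne : p1 + α • p0 ≠ 0 := by
        intro h
        apply h2 (-α)
        rw [neg_smul]
        exact eq_neg_of_add_eq_zero_left h
      have hqS : p1 + α • p0 ∈ S4 := Finset.mem_erase.mpr ⟨hqne, Finset.mem_univ _⟩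
      have hqnm : ∀ c : F4, p1 + α • p0 ≠ c • p0 := by
        intro c h
        apply h2 (c - α)
        rw [sub_smul]
        exact eq_sub_of_add_eq h
      have : ¬ (wt ((p1 + α • p0).1 • u + (p1 + α • p0).2 • v) % 2 = 0) := by
        intro h
        obtain ⟨c, hc⟩ := huniq _ hqS h
        exact hqnm c hc
      omega
    have hexp : ∀ α : F4, (p1 + α • p0).1 • u + (p1 + α • p0).2 • v = u' + α • w := by
      intro α
      simp only [Prod.fst_add, Prod.snd_add, Prod.smul_fst, Prod.smul_snd, smul_eq_mul,
        add_smul, mul_smul, hu', hw, smul_add]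
      abel
    have hval : ∀ α : F4, hermInner (u' + α • w) (u' + α • w) = 1 := by
      intro α
      rw [← hexp α, hermInner_self]
      exact cast_odd _ (hodd α)
    have h0 : hermInner u' u' = 1 := by
      have := hval 0
      simpa using this
    set β := hermInner u' w with hβ
    have e1 : β + β^2 = 0 := by
      have := herm_expand u' w 1
      rw [hval 1, h0, hww] at this
      linear_combination -this
    have e2 : ω^2*β + ω*β^2 = 0 := by
      have := herm_expand u' w ω
      rw [hval ω, h0, hww] at this
      linear_combination -this
    have hβ0 : β = 0 := beta_zero ω β hω0 hωq e1 e2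
    rw [hermInner_conj u' w, ← hβ, hβ0]
    norm_num
  have hwu : hermInner w u = 0 := by
    by_cases hmul : ∀ c : F4, (((1:F4), (0:F4)) : F4 × F4) ≠ c • p0
    · have h := key (1, 0) (by simp [Prod.mk_eq_zero]) hmul
      simpa using h
    · push_neg at hmul
      obtain ⟨c, hc⟩ := hmul
      have hcu : u = c • w := by
        have h1 : (1:F4) = c * p0.1 := by
          have := congrArg Prod.fst hc
          simpa [Prod.smul_fst, smul_eq_mul] using this
        have h2 : (0:F4) = c * p0.2 := by
          have := congrArg Prod.snd hc
          simpa [Prod.smul_snd, smul_eq_mul] using this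
        calc u = (1:F4) • u + (0:F4) • v := by simp
        _ = (c * p0.1) • u + (c * p0.2) • v := by rw [← h1, ← h2]
        _ = c • w := by rw [hw, mul_smul, mul_smul, smul_add]
      rw [hcu, hermInner_smul_right, hww, mul_zero]
  have hwv : hermInner w v = 0 := by
    by_cases hmul : ∀ c : F4, (((0:F4), (1:F4)) : F4 × F4) ≠ c • p0
    · have h := key (0, 1) (by simp [Prod.mk_eq_zero]) hmul
      simpa using h
    · push_neg at hmul
      obtain ⟨c, hc⟩ := hmul
      have hcv : v = c • w := by
        have h1 : (0:F4) = c * p0.1 := by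
          have := congrArg Prod.fst hc
          simpa [Prod.smul_fst, smul_eq_mul] using this
        have h2 : (1:F4) = c * p0.2 := by
          have := congrArg Prod.snd hc
          simpa [Prod.smul_snd, smul_eq_mul] using this
        calc v = (0:F4) • u + (1:F4) • v := by simp
        _ = (c * p0.1) • u + (c * p0.2) • v := by rw [← h1, ← h2]
        _ = c • w := by rw [hw, mul_smul, mul_smul, smul_add]
      rw [hcv, hermInner_smul_right, hww, mul_zero]
  have hdual : inHermDual C w := by
    intro y hy
    obtain ⟨a, b, rfl⟩ := hrep y hy
    rw [hermInner_add_right, hermInner_smul_right, hermInner_smul_right, hwu, hwv]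
    ring
  exact hwne (hlcd w hwC hdual)

end Stmt3Aux

end


open Stmt3Aux

/-- determination of `d₄(n,2)` for `n ≥ 3`. -/
theorem stmt3 (n : ℕ) (hn : 3 ≤ n) :
    ((n % 5 = 1 ∨ n % 5 = 2 ∨ n % 5 = 3) → d4Is n 2 (4 * n / 5)) ∧
    ((n % 5 = 0 ∨ n % 5 = 4) → d4Is n 2 (4 * n / 5 - 1)) := by
  constructor
  · intro hr
    constructor
    · rcases hr with h | h | h
      · obtain ⟨m, rfl⟩ : ∃ m, n = 5*m+1 := ⟨n/5, by omega⟩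
        rw [show 4*(5*m+1)/5 = 4*m from by omega]
        exact exists_code_r1 m (by omega)
      · obtain ⟨m, rfl⟩ : ∃ m, n = 5*m+2 := ⟨n/5, by omega⟩
        rw [show 4*(5*m+2)/5 = 4*m+1 from by omega]
        exact exists_code_r2 m
      · obtain ⟨m, rfl⟩ : ∃ m, n = 5*m+3 := ⟨n/5, by omega⟩
        rw [show 4*(5*m+3)/5 = 4*m+2 from by omega]
        exact exists_code_r3 m
    · intro C hC _
      exact ub_generic C hC
  · intro hr
    constructor
    · rcases hr with h | h
      · obtain ⟨m, rfl⟩ : ∃ m, n = 5*m := ⟨n/5, by omega⟩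
        rw [show 4*(5*m)/5 - 1 = 4*m - 1 from by omega]
        exact exists_code_r0 m (by omega)
      · obtain ⟨m, rfl⟩ : ∃ m, n = 5*m+4 := ⟨n/5, by omega⟩
        rw [show 4*(5*m+4)/5 - 1 = 4*m+2 from by omega]
        exact exists_code_r4 m
    · intro C hC hlcd
      rcases hr with h | h
      · exact ub_mod0 h hn C hC hlcd
      · exact ub_mod4 h C hC hlcd
end

section
/- Let v, b, r, λ, α be positive integers with r > λ, and let A = (a_{ij}) be a b × v matrix with entries in {0,1} such that for every point p ∈ {1,…,v} one has ∑_{i=1}^{b} a_{ip} = r, and for every pair of distinct points p ≠ q one has ∑_{i=1}^{b} a_{ip} a_{iq} = λ (i.e., A is the incidence matrix of a 2-design with b blocks, replication number r and pair-index λ). Let m = (m₁,…,m_v) be a vector of nonnegative integers. If every entry of the b × 1 integer matrix A mᵀ is at least α, then for every i ∈ {1,…,v}: r·α − λ·∑_{j=1}^{v} m_j ≤ (r−λ)·m_i, and (b−r)·α ≤ (r−λ)·(∑_{j=1}^{v} m_j − m_i). -/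
open scoped Classical

/-- counting argument for 2-designs (Lemma on incidence matrices). -/
theorem stmt4 (v b r lam α : ℕ) (hv : 1 ≤ v) (hb : 1 ≤ b) (hr : 1 ≤ r)
    (hlam : 1 ≤ lam) (hα : 1 ≤ α) (hrl : lam < r)
    (A : Matrix (Fin b) (Fin v) ℕ)
    (hA01 : ∀ i j, A i j = 0 ∨ A i j = 1)
    (hArep : ∀ p, ∑ i, A i p = r)
    (hApair : ∀ p q : Fin v, p ≠ q → ∑ i, A i p * A i q = lam)
    (m : Fin v → ℕ)
    (hm : ∀ i, α ≤ ∑ j, A i j * m j) :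
    ∀ i : Fin v,
      (r : ℤ) * α - (lam : ℤ) * ∑ j, (m j : ℤ) ≤ ((r : ℤ) - lam) * m i ∧
      ((b : ℤ) - r) * α ≤ ((r : ℤ) - lam) * ((∑ j, (m j : ℤ)) - m i) := by
  intro i
  set S : ℤ := ∑ j, (m j : ℤ) with hS
  -- the weight of each block
  set w : Fin b → ℤ := fun t => ∑ j, (A t j : ℤ) * m j with hwdef
  have hw : ∀ t : Fin b, (α : ℤ) ≤ w t := by
    intro t
    have := hm t
    simp only [hwdef]
    exact_mod_cast this
  have hA0 : ∀ t, (0 : ℤ) ≤ (A t i : ℤ) := fun t => Int.natCast_nonneg _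
  have hA1 : ∀ t, (A t i : ℤ) ≤ 1 := by
    intro t; rcases hA01 t i with h | h <;> simp [h]
  have hAi : ∑ t, (A t i : ℤ) = r := by
    have := hArep i
    exact_mod_cast this
  -- column sums of products
  have hcol : ∀ j : Fin v, (∑ t, (A t i : ℤ) * A t j)
      = if j = i then (r : ℤ) else (lam : ℤ) := by
    intro j
    by_cases hji : j = i
    · subst hji
      rw [if_pos rfl]
      have h1 : ∀ t, A t j * A t j = A t j := by
        intro t; rcases hA01 t j with h | h <;> simp [h]
      have : ∑ t, A t j * A t j = r := by
        simp only [h1]; exact hArep j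
      exact_mod_cast this
    · rw [if_neg hji]
      have := hApair i j (Ne.symm hji)
      exact_mod_cast this
  -- key identity
  have key : ∑ t, (A t i : ℤ) * w t = (lam : ℤ) * S + ((r : ℤ) - lam) * m i := by
    have h1 : ∑ t, (A t i : ℤ) * w t = ∑ j, (∑ t, (A t i : ℤ) * A t j) * m j := by
      simp only [hwdef, Finset.mul_sum, Finset.sum_mul]
      rw [Finset.sum_comm]
      apply Finset.sum_congr rfl; intro j _
      apply Finset.sum_congr rfl; intro t _
      ring
    rw [h1]
    simp only [hcol]
    rw [← Finset.add_sum_erase _ _ (Finset.mem_univ i)]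
    have h2 : ∑ j ∈ Finset.univ.erase i, (if j = i then (r : ℤ) else lam) * m j
        = (lam : ℤ) * ∑ j ∈ Finset.univ.erase i, (m j : ℤ) := by
      rw [Finset.mul_sum]
      apply Finset.sum_congr rfl; intro j hj
      rw [if_neg (Finset.ne_of_mem_erase hj)]
    rw [h2, if_pos rfl]
    have h3 : ∑ j ∈ Finset.univ.erase i, (m j : ℤ) = S - m i := by
      rw [hS, ← Finset.add_sum_erase _ _ (Finset.mem_univ i)]; ring
    rw [h3]; ring
  -- total sum
  have total : ∑ t, w t = (r : ℤ) * S := by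
    simp only [hwdef]
    rw [Finset.sum_comm]
    have : ∀ j : Fin v, ∑ t, (A t j : ℤ) * m j = (r : ℤ) * m j := by
      intro j
      rw [← Finset.sum_mul]
      congr 1
      exact_mod_cast hArep j
    simp only [this]
    rw [hS, Finset.mul_sum]
  constructor
  · -- first inequality
    have lb : (r : ℤ) * α ≤ ∑ t, (A t i : ℤ) * w t := by
      rw [← hAi, Finset.sum_mul]
      apply Finset.sum_le_sum
      intro t _
      exact mul_le_mul_of_nonneg_left (hw t) (hA0 t)
    rw [key] at lb
    linarith
  · -- second inequality
    have key2 : ∑ t, (1 - (A t i : ℤ)) * w t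
        = ((r : ℤ) - lam) * (S - m i) := by
      have : ∑ t, (1 - (A t i : ℤ)) * w t = ∑ t, w t - ∑ t, (A t i : ℤ) * w t := by
        rw [← Finset.sum_sub_distrib]
        apply Finset.sum_congr rfl; intro t _; ring
      rw [this, total, key]; ring
    have lb : ((b : ℤ) - r) * α ≤ ∑ t, (1 - (A t i : ℤ)) * w t := by
      have hcount : ∑ t, (1 - (A t i : ℤ)) = (b : ℤ) - r := by
        rw [Finset.sum_sub_distrib, hAi]
        simp
      rw [← hcount, Finset.sum_mul]
      apply Finset.sum_le_sum
      intro t _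
      have h0 : (0 : ℤ) ≤ 1 - (A t i : ℤ) := by linarith [hA1 t]
      exact mul_le_mul_of_nonneg_left (hw t) h0
    rw [key2] at lb
    exact lb
end

section
/- Let k ≥ 3 be an integer and set N = (4^k − 1)/3. Let h₁,…,h_N be nonzero vectors in 𝔽₄^k that are pairwise linearly independent and such that every nonzero vector of 𝔽₄^k is a scalar multiple of some h_i (i.e., the h_i represent all points of the projective space PG(k−1,4), as the columns of a generator matrix of the quaternary simplex code). Let m₁,…,m_N be nonnegative integers with ∑_{i=1}^{N} m_i = n, and let α be a positive integer. If for every nonzero x ∈ 𝔽₄^k one has ∑_{i : x·h_i ≠ 0} m_i ≥ α (where x·h_i = ∑_{j=1}^{k} x_j (h_i)_j ), then for every i ∈ {1,…,N}: 4α − 3n ≤ m_i and 3·4^{k−2}·m_i ≤ 3·4^{k−2}·n − (4^{k−1} − 1)·α. -/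
open scoped Classical

/-!
Double counting. Summing `α ≤ codewordWeight h m x` over the `x` with `x ⬝ᵥ hᵢ ≠ 0`, resp. over
the nonzero `x` with `x ⬝ᵥ hᵢ = 0`, and exchanging the sums, column `j` contributes `m j` times
the number of those `x` with `x ⬝ᵥ h j ≠ 0`. For `j ≠ i` the vectors `hᵢ, h j` are linearly independent, so
`x ↦ (x ⬝ᵥ hᵢ, x ⬝ᵥ h j)` is onto `F²` and all these numbers are explicit powers of `q`.
-/

open Finset Matrix

theorem AddMonoidHom.card_filter_mem_mul_card {G M : Type*} [AddGroup G] [Fintype G]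
    [AddGroup M] [Fintype M] [DecidableEq M] (f : G →+ M) (hf : Function.Surjective f)
    (S : Finset M) : #{g | f g ∈ S} * Fintype.card M = #S * Fintype.card G := by
  have hcard : ∀ T : Finset M, #{g | f g ∈ T} = #T * #{g | f g = 0} := fun T => by
    rw [card_eq_sum_card_fiberwise (f := f) (s := {g | f g ∈ T}) (t := T)
        fun g hg => by simpa using hg, ← smul_eq_mul, ← sum_const]
    refine sum_congr rfl fun w hw => ?_
    rw [filter_filter, ← AddMonoidHom.card_fiber_eq_of_mem_range f (hf w) (hf 0)]
    exact congrArg card (filter_congr fun g _ => ⟨And.right, fun hg => ⟨hg ▸ hw, hg⟩⟩)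
  have huniv := hcard univ
  simp only [mem_univ, filter_true, card_univ] at huniv
  rw [hcard, huniv]
  ring

theorem Matrix.mulVecLin_surjective_of_linearIndependent {F n κ : Type*} [Field F] [Fintype n]
    [Fintype κ] {v : κ → n → F} (hv : LinearIndependent F v) :
    Function.Surjective (of v).mulVecLin := by
  rw [← LinearMap.range_eq_top]
  refine Submodule.eq_top_of_finrank_eq ?_
  rw [← rank, rank_eq_finrank_span_row]
  exact (finrank_span_eq_card hv).trans (Module.finrank_fintype_fun_eq_card F).symm

section CodewordWeight

variable {R n ι : Type*} [Semiring R] [Fintype n] [Fintype ι] (h : ι → n → R) (m : ι → ℕ)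

noncomputable def codewordWeight (x : n → R) : ℕ :=
  ∑ i ∈ univ.filter (fun i => x ⬝ᵥ h i ≠ 0), m i

theorem card_mul_le_sum_card_mul {α : ℕ} (hwt : ∀ x : n → R, x ≠ 0 → α ≤ codewordWeight h m x)
    (s : Finset (n → R)) (hs : 0 ∉ s) :
    #s * α ≤ ∑ i, #{x ∈ s | x ⬝ᵥ h i ≠ 0} * m i := by
  calc #s * α = ∑ _x ∈ s, α := by rw [sum_const, smul_eq_mul]
    _ ≤ ∑ x ∈ s, codewordWeight h m x :=
      sum_le_sum fun x hx => hwt x (ne_of_mem_of_not_mem hx hs)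
    _ = ∑ i, #{x ∈ s | x ⬝ᵥ h i ≠ 0} * m i := by
      simp only [codewordWeight, sum_filter]
      rw [sum_comm]
      refine sum_congr rfl fun i _ => ?_
      rw [← sum_filter, sum_const, smul_eq_mul]

end CodewordWeight

theorem linearIndependent_pair {F n ι : Type*} [Field F] {h : ι → n → F} (hnz : ∀ i, h i ≠ 0)
    (hpli : ∀ i j, i ≠ j → ∀ c : F, h i ≠ c • h j) {i j : ι} (hij : i ≠ j) :
    LinearIndependent F ![h i, h j] :=
  (LinearIndependent.pair_iff' (hnz i)).mpr fun c => (hpli j i hij.symm c).symm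

section Counting

variable {F : Type*} [Field F] [Fintype F] {n : Type*} [Fintype n]

local notation "q" => Fintype.card F
local notation "d" => Fintype.card n

theorem card_filter_forall_dotProduct_mem {κ : Type*} [Fintype κ] {v : κ → n → F}
    (hv : LinearIndependent F v) (S : κ → Finset F) :
    #{x : n → F | ∀ r, x ⬝ᵥ v r ∈ S r} =
      (∏ r, #(S r)) * q ^ (d - Fintype.card κ) := by
  have hcount := (of v).mulVecLin.toAddMonoidHom.card_filter_mem_mul_card
    (mulVecLin_surjective_of_linearIndependent hv) (Fintype.piFinset S)
  rw [Fintype.card_piFinset, Fintype.card_fun, Fintype.card_fun] at hcount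
  have hκ : Fintype.card κ ≤ d :=
    (hv.fintype_card_le_finrank).trans (Module.finrank_fintype_fun_eq_card F).le
  refine Nat.eq_of_mul_eq_mul_right (pow_pos (Fintype.card_pos (α := F)) (Fintype.card κ)) ?_
  rw [mul_assoc, ← pow_add, Nat.sub_add_cancel hκ, ← hcount]
  congr 2
  ext x
  simp [Fintype.mem_piFinset, mulVec, dotProduct_comm]

theorem card_filter_dotProduct_ne_zero {u : n → F} (hu : u ≠ 0) :
    #{x : n → F | x ⬝ᵥ u ≠ 0} = (q - 1) * q ^ (d - 1) := by
  have := card_filter_forall_dotProduct_mem (v := fun _ : Unit => u)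
    (linearIndependent_unique_iff.mpr hu) (fun _ => {0}ᶜ)
  simpa [card_compl] using this

theorem card_filter_dotProduct_eq_zero {u : n → F} (hu : u ≠ 0) :
    #{x : n → F | x ⬝ᵥ u = 0} = q ^ (d - 1) := by
  have := card_filter_forall_dotProduct_mem (v := fun _ : Unit => u)
    (linearIndependent_unique_iff.mpr hu) (fun _ => {0})
  simpa using this

theorem card_filter_dotProduct_ne_zero_and_ne_zero {u v : n → F}
    (huv : LinearIndependent F ![u, v]) :
    #{x : n → F | x ⬝ᵥ u ≠ 0 ∧ x ⬝ᵥ v ≠ 0} = (q - 1) ^ 2 * q ^ (d - 2) := by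
  have := card_filter_forall_dotProduct_mem huv (fun _ => {0}ᶜ)
  simpa [card_compl, Fin.forall_fin_two, sq] using this

theorem card_filter_dotProduct_eq_zero_and_ne_zero {u v : n → F}
    (huv : LinearIndependent F ![u, v]) :
    #{x : n → F | x ⬝ᵥ u = 0 ∧ x ⬝ᵥ v ≠ 0} = (q - 1) * q ^ (d - 2) := by
  have := card_filter_forall_dotProduct_mem huv ![{0}, {0}ᶜ]
  simpa [card_compl, Fin.forall_fin_two, Fin.prod_univ_two] using this

variable {ι : Type*} [Fintype ι] [DecidableEq ι] {h : ι → n → F}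

theorem multiplicity_lower_bound (hnz : ∀ i, h i ≠ 0)
    (hpli : ∀ i j, i ≠ j → ∀ c : F, h i ≠ c • h j) (m : ι → ℕ) {α : ℕ}
    (hwt : ∀ x : n → F, x ≠ 0 → α ≤ codewordWeight h m x) (hd : 2 ≤ d) (i : ι) :
    q * α ≤ q * m i + (q - 1) * ∑ j ∈ univ.erase i, m j := by
  obtain ⟨e, he1, he2⟩ : ∃ e, d - 1 = e + 1 ∧ d - 2 = e := ⟨d - 2, by omega, rfl⟩
  set A : Finset (n → F) := {x | x ⬝ᵥ h i ≠ 0}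
  have hA : #A = (q - 1) * q ^ (e + 1) := by
    rw [card_filter_dotProduct_ne_zero (hnz i), he1]
  have hB : ∀ j ∈ univ.erase i, #{x ∈ A | x ⬝ᵥ h j ≠ 0} = (q - 1) ^ 2 * q ^ e := fun j hj => by
    rw [filter_filter, card_filter_dotProduct_ne_zero_and_ne_zero
      (linearIndependent_pair hnz hpli (ne_of_mem_erase hj).symm), he2]
  have key := card_mul_le_sum_card_mul h m hwt A (by simp [A])
  rw [← add_sum_erase _ _ (mem_univ i), filter_true_of_mem fun x hx => (mem_filter.mp hx).2,
    sum_congr rfl fun j hj => by rw [hB j hj], hA] at key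
  have hpos : 0 < (q - 1) * q ^ e :=
    Nat.mul_pos (Nat.sub_pos_of_lt Fintype.one_lt_card) (pow_pos Fintype.card_pos e)
  refine Nat.le_of_mul_le_mul_left ?_ hpos
  calc (q - 1) * q ^ e * (q * α) = (q - 1) * q ^ (e + 1) * α := by ring
    _ ≤ _ := key
    _ = _ := by rw [← mul_sum]; ring

theorem multiplicity_upper_bound (hnz : ∀ i, h i ≠ 0)
    (hpli : ∀ i j, i ≠ j → ∀ c : F, h i ≠ c • h j) (m : ι → ℕ) {α : ℕ}
    (hwt : ∀ x : n → F, x ≠ 0 → α ≤ codewordWeight h m x) (i : ι) :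
    (q ^ (d - 1) - 1) * α ≤ (q - 1) * q ^ (d - 2) * ∑ j ∈ univ.erase i, m j := by
  set Z : Finset (n → F) := ({x | x ⬝ᵥ h i = 0} : Finset (n → F)).erase 0
  have hZ : #Z = q ^ (d - 1) - 1 := by
    rw [card_erase_of_mem (by simp), card_filter_dotProduct_eq_zero (hnz i)]
  have hC : ∀ j ∈ univ.erase i, #{x ∈ Z | x ⬝ᵥ h j ≠ 0} = (q - 1) * q ^ (d - 2) :=
    fun j hj => by
    rw [← card_filter_dotProduct_eq_zero_and_ne_zero
      (linearIndependent_pair hnz hpli (ne_of_mem_erase hj).symm)]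
    congr 1
    ext x
    simp only [Z, mem_filter, mem_erase, mem_univ, true_and]
    refine ⟨fun hx => ⟨hx.1.2, hx.2⟩, fun hx => ⟨⟨?_, hx.1⟩, hx.2⟩⟩
    rintro rfl
    simp at hx
  have key := card_mul_le_sum_card_mul h m hwt Z (notMem_erase 0 _)
  have hZi : {x ∈ Z | x ⬝ᵥ h i ≠ 0} = ∅ :=
    filter_false_of_mem fun x hx => not_not.mpr (mem_filter.mp (mem_of_mem_erase hx)).2
  rwa [← add_sum_erase _ _ (mem_univ i), hZi, card_empty, zero_mul, zero_add,
    sum_congr rfl fun j hj => by rw [hC j hj], hZ, ← mul_sum] at key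

end Counting

theorem stmt5_general (k : ℕ) (hk : 3 ≤ k) (n α : ℕ)
    (h : Fin ((4 ^ k - 1) / 3) → (Fin k → F4))
    (hnz : ∀ i, h i ≠ 0)
    (hpli : ∀ i j, i ≠ j → ∀ c : F4, h i ≠ c • h j)
    (m : Fin ((4 ^ k - 1) / 3) → ℕ) (hm : ∑ i, m i = n)
    (hwt : ∀ x : Fin k → F4, x ≠ 0 →
      α ≤ ∑ i ∈ Finset.univ.filter (fun i => ∑ j, x j * h i j ≠ 0), m i) :
    ∀ i, 4 * (α : ℤ) - 3 * n ≤ (m i : ℤ) ∧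
      3 * 4 ^ (k - 2) * (m i : ℤ) ≤ 3 * 4 ^ (k - 2) * (n : ℤ) - (4 ^ (k - 1) - 1) * α := by
  intro i
  have : Fintype F4 := Fintype.ofFinite F4
  have hq : Fintype.card F4 = 4 := by
    rw [← Nat.card_eq_fintype_card, GaloisField.card 2 2 two_ne_zero]; rfl
  have hlower := multiplicity_lower_bound hnz hpli m hwt (by rw [Fintype.card_fin]; omega) i
  have hupper := multiplicity_upper_bound hnz hpli m hwt i
  have hsum : m i + ∑ j ∈ univ.erase i, m j = n := by rw [add_sum_erase _ _ (mem_univ i), hm]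
  have hpow : 1 ≤ 4 ^ (k - 1) := Nat.one_le_pow _ _ (by norm_num)
  simp only [hq, Fintype.card_fin] at hlower hupper
  rw [← hsum]
  zify [hpow] at hlower hupper
  constructor <;> push_cast <;> linarith

/-- bounds on the column multiplicities of a quaternary `[n,k]` code of
minimum weight at least `α`, via the simplex code / projective points. -/
theorem stmt5 (k : ℕ) (hk : 3 ≤ k) (n α : ℕ) (hα : 1 ≤ α)
    (h : Fin ((4 ^ k - 1) / 3) → (Fin k → F4))
    (hnz : ∀ i, h i ≠ 0)
    (hpli : ∀ i j, i ≠ j → ∀ c : F4, h i ≠ c • h j)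
    (hcover : ∀ x : Fin k → F4, x ≠ 0 → ∃ i, ∃ c : F4, x = c • h i)
    (m : Fin ((4 ^ k - 1) / 3) → ℕ) (hm : ∑ i, m i = n)
    (hwt : ∀ x : Fin k → F4, x ≠ 0 →
      α ≤ ∑ i ∈ Finset.univ.filter (fun i => ∑ j, x j * h i j ≠ 0), m i) :
    ∀ i, 4 * (α : ℤ) - 3 * n ≤ (m i : ℤ) ∧
      3 * 4 ^ (k - 2) * (m i : ℤ) ≤ 3 * 4 ^ (k - 2) * (n : ℤ) - (4 ^ (k - 1) - 1) * α :=
  stmt5_general k hk n α h hnz hpli m hm hwt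
end

section
/- Let k ≥ 3 and s ≥ 1 be integers. Then there is no quaternary Hermitian LCD code of length ((4^k − 1)/3)·s, dimension k, and minimum weight 4^{k−1}·s. -/
open scoped Classical

lemma F4card : Fintype.card F4 = 4 := by
  have := GaloisField.card 2 2 (by norm_num)
  rw [Nat.card_eq_fintype_card] at this
  simpa using this

lemma F4cube (x : F4) (hx : x ≠ 0) : x ^ 3 = 1 := by
  have h := FiniteField.pow_card_sub_one_eq_one x hx
  rwa [F4card] at h

lemma F4four (x : F4) : x ^ 4 = x := by
  have h := FiniteField.pow_card x
  rwa [F4card] at h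

lemma F4two : (1 : F4) + 1 = 0 := CharTwo.add_self_eq_zero 1

lemma F4sq (x y : F4) : (x + y) ^ 2 = x ^ 2 + y ^ 2 := CharTwo.add_sq x y

lemma F4omega : ∃ w : F4, w ^ 2 + w = 1 ∧ w ≠ 0 := by
  have : ∃ w : F4, w ≠ 0 ∧ w ≠ 1 := by
    by_contra h
    push_neg at h
    have hsub : (Finset.univ : Finset F4) ⊆ {0, 1} := by
      intro x _
      rcases eq_or_ne x 0 with h0 | h0
      · simp [h0]
      · simp [h x h0]
    have hcc := Finset.card_le_card hsub
    have h2 : ({0, 1} : Finset F4).card ≤ 2 :=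
      (Finset.card_insert_le _ _).trans (by simp)
    have h4 : Fintype.card F4 = 4 := F4card
    simp only [Finset.card_univ] at hcc
    omega
  obtain ⟨w, hw0, hw1⟩ := this
  refine ⟨w, ?_, hw0⟩
  have h3 : w ^ 3 = 1 := F4cube w hw0
  have hfac : (w - 1) * (w ^ 2 + w + 1) = 0 := by linear_combination h3
  rcases mul_eq_zero.mp hfac with h | h
  · exact absurd (sub_eq_zero.mp h) hw1
  · linear_combination h - F4two

lemma even_cast_F4 {m : ℕ} (h : Even m) : (m : F4) = 0 := by
  obtain ⟨r, hr⟩ := h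
  subst hr
  push_cast
  linear_combination (r : F4) * F4two

lemma herm_conj {n : ℕ} (x y : Fin n → F4) : hermInner y x = (hermInner x y) ^ 2 := by
  unfold hermInner
  have hfr := map_sum (frobenius F4 2) (fun i => x i * y i ^ 2) Finset.univ
  simp only [frobenius_def] at hfr
  rw [hfr]
  apply Finset.sum_congr rfl
  intro i _
  have h4 : (y i) ^ 4 = y i := F4four (y i)
  calc y i * x i ^ 2 = x i ^ 2 * (y i ^ 4) := by rw [h4]; ring
    _ = (x i * y i ^ 2) ^ 2 := by ring

lemma herm_add_left {n : ℕ} (x y z : Fin n → F4) :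
    hermInner (x + y) z = hermInner x z + hermInner y z := by
  unfold hermInner
  rw [← Finset.sum_add_distrib]
  apply Finset.sum_congr rfl
  intro i _
  simp [add_mul]

lemma herm_add_right {n : ℕ} (x y z : Fin n → F4) :
    hermInner x (y + z) = hermInner x y + hermInner x z := by
  unfold hermInner
  rw [← Finset.sum_add_distrib]
  apply Finset.sum_congr rfl
  intro i _
  rw [Pi.add_apply, F4sq]
  ring

lemma herm_smul_left {n : ℕ} (a : F4) (x y : Fin n → F4) :
    hermInner (a • x) y = a * hermInner x y := by
  unfold hermInner
  rw [Finset.mul_sum]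
  apply Finset.sum_congr rfl
  intro i _
  simp [mul_assoc]

lemma herm_smul_right {n : ℕ} (a : F4) (x y : Fin n → F4) :
    hermInner x (a • y) = a ^ 2 * hermInner x y := by
  unfold hermInner
  rw [Finset.mul_sum]
  apply Finset.sum_congr rfl
  intro i _
  simp [mul_pow]
  ring

/-- Polarization: if the Hermitian "norm" vanishes on `x`, `y`, `x+y` and `x+w•y`
for a generator `w` of `F4`, then `hermInner x y = 0`. -/
lemma herm_polarize {n : ℕ} (x y : Fin n → F4)
    (hx : hermInner x x = 0) (hy : hermInner y y = 0)
    (hxy : hermInner (x + y) (x + y) = 0)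
    (hw : ∀ w : F4, hermInner (x + w • y) (x + w • y) = 0) :
    hermInner x y = 0 := by
  obtain ⟨w, hw1, hw0⟩ := F4omega
  set t := hermInner x y with ht
  have hconj : hermInner y x = t ^ 2 := herm_conj x y
  have e1 : t + t ^ 2 = 0 := by
    have := hxy
    rw [herm_add_left, herm_add_right, herm_add_right] at this
    rw [hx, hy, hconj] at this
    linear_combination this
  have e2 : w ^ 2 * t + w * t ^ 2 = 0 := by
    have := hw w
    rw [herm_add_left, herm_add_right, herm_add_right, herm_smul_left, herm_smul_right,
        herm_smul_right, herm_smul_left] at this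
    rw [hx, hy, hconj] at this
    linear_combination this + w ^ 2 * ht
  -- t^2 = t  (char 2, from e1), then (w^2+w) t = t gives t = 0
  have ht2 : t ^ 2 = t := by linear_combination -e1 + t ^ 2 * F4two
  rw [ht2] at e2
  calc t = (w ^ 2 + w) * t := by rw [hw1]; ring
    _ = 0 := by linear_combination e2

/-- `hermInner x x` equals the weight of `x` mod 2 (as an element of `F4`). -/
lemma herm_self {n : ℕ} (x : Fin n → F4) : hermInner x x = (wt x : F4) := by
  unfold hermInner wt
  rw [Finset.card_filter]
  push_cast
  apply Finset.sum_congr rfl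
  intro i _
  rcases eq_or_ne (x i) 0 with h | h
  · simp [h]
  · have : x i * x i ^ 2 = x i ^ 3 := by ring
    rw [this, F4cube _ h, if_pos h]

/-- A linear functional on a finite `F4`-module is nonzero on at most 3/4 of the points. -/
lemma count_bound {M : Type*} [AddCommGroup M] [Module F4 M] [Fintype M]
    (φ : M →ₗ[F4] F4) :
    4 * (Finset.univ.filter (fun v => φ v ≠ 0)).card ≤ 3 * Fintype.card M := by
  by_cases h0 : ∀ v, φ v = 0
  · have he : (Finset.univ.filter (fun v => φ v ≠ 0)) = ∅ := by
      apply Finset.filter_eq_empty_iff.mpr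
      intro v _
      simp [h0 v]
    simp [he]
  · push_neg at h0
    obtain ⟨v0, hv0⟩ := h0
    have hsurj : Function.Surjective φ := by
      intro a
      refine ⟨(a * (φ v0)⁻¹) • v0, ?_⟩
      rw [map_smul, smul_eq_mul]
      field_simp
    set K := LinearMap.ker φ with hK
    have e : (M ⧸ K) ≃ F4 := (φ.quotKerEquivOfSurjective hsurj).toEquiv
    have hq : Nat.card (M ⧸ K) = 4 := by
      rw [Nat.card_congr e, ← F4card, Nat.card_eq_fintype_card]
    have hL : Nat.card M = Nat.card (M ⧸ K) * Nat.card K := by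
      have h := AddSubgroup.card_eq_card_quotient_mul_card_addSubgroup (K.toAddSubgroup)
      exact h
    have hker : (Finset.univ.filter (fun v => φ v = 0)).card = Nat.card K := by
      have h1 : Nat.card K = Nat.card {v : M // φ v = 0} := by
        apply Nat.card_congr
        apply Equiv.subtypeEquivRight
        intro v
        simp [hK, LinearMap.mem_ker]
      rw [h1, Nat.card_eq_fintype_card, Fintype.card_subtype]
    have hsplit := Finset.card_filter_add_card_filter_not
      (s := (Finset.univ : Finset M)) (p := fun v => φ v = 0)
    simp only [ne_eq] at hsplit ⊢
    rw [hq, Nat.card_eq_fintype_card] at hL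
    rw [Finset.card_univ] at hsplit
    omega

lemma wt_zero {n : ℕ} : wt (0 : Fin n → F4) = 0 := by simp [wt]

/-- Key lemma: with simplex-type parameters the code would be Hermitian
self-orthogonal, contradicting LCD. -/
lemma noHermLCD_aux (q m s n d k : ℕ) (hn : n = m * s) (hd : d = q * s)
    (hq4 : 4 ^ k = q * 4) (hm : 3 * m + 1 = 4 ^ k) (hdeven : Even d)
    (C : Submodule F4 (Fin n → F4)) (hrank : Module.finrank F4 C = k)
    (hLCD : IsHermLCD C) (hmin : minWtIs C d) : False := by
  letI : Fintype C := Fintype.ofFinite _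
  have hcard : Fintype.card C = 4 ^ k := by
    rw [Module.card_eq_pow_finrank (K := F4) (V := C), F4card, hrank]
  -- per-coordinate counting
  have hcount : ∀ i : Fin n,
      (Finset.univ.filter (fun x : C => (x : Fin n → F4) i ≠ 0)).card ≤ 3 * q := by
    intro i
    have hb := count_bound ((LinearMap.proj i).comp C.subtype)
    have heq : (Finset.univ.filter (fun x : C => ((LinearMap.proj i).comp C.subtype) x ≠ 0))
        = (Finset.univ.filter (fun x : C => (x : Fin n → F4) i ≠ 0)) := by
      apply Finset.filter_congr
      intro x _
      rfl
    rw [heq, hcard, hq4] at hb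
    omega
  -- upper bound on the total weight
  have hub : ∑ x : C, wt (x : Fin n → F4) ≤ n * (3 * q) := by
    have hswap : ∑ x : C, wt (x : Fin n → F4)
        = ∑ i : Fin n, (Finset.univ.filter (fun x : C => (x : Fin n → F4) i ≠ 0)).card := by
      simp only [wt, Finset.card_filter]
      exact Finset.sum_comm
    rw [hswap]
    calc ∑ i : Fin n, (Finset.univ.filter (fun x : C => (x : Fin n → F4) i ≠ 0)).card
        ≤ ∑ _i : Fin n, 3 * q := Finset.sum_le_sum (fun i _ => hcount i)
      _ = n * (3 * q) := by simp [Finset.sum_const, mul_comm]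
  -- lower bound: nonzero codewords
  set T := (Finset.univ.filter (fun x : C => x ≠ 0)) with hT
  have hTcard : T.card = 3 * m := by
    have hzero : (Finset.univ.filter (fun x : C => x = 0)).card = 1 := by
      rw [Finset.filter_eq' Finset.univ (0 : C)]
      simp
    have hsplit := Finset.card_filter_add_card_filter_not
      (s := (Finset.univ : Finset C)) (p := fun x : C => x = 0)
    rw [Finset.card_univ, hcard] at hsplit
    have : T.card = (Finset.univ.filter (fun x : C => ¬ x = 0)).card := by rw [hT]
    omega
  have hdle : ∀ x ∈ T, d ≤ wt (x : Fin n → F4) := by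
    intro x hx
    rw [hT, Finset.mem_filter] at hx
    exact hmin.2 x.1 x.2 (fun h => hx.2 (Subtype.ext h))
  have hlb : T.card * d ≤ ∑ x ∈ T, wt (x : Fin n → F4) := by
    calc T.card * d = ∑ _x ∈ T, d := by rw [Finset.sum_const, smul_eq_mul]
      _ ≤ ∑ x ∈ T, wt (x : Fin n → F4) := Finset.sum_le_sum hdle
  have hsub : ∑ x ∈ T, wt (x : Fin n → F4) ≤ ∑ x : C, wt (x : Fin n → F4) :=
    Finset.sum_le_sum_of_subset (Finset.filter_subset _ _)
  have harith : n * (3 * q) = (3 * m) * d := by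
    rw [hn, hd]
    ring
  -- equality of sums
  have hsumeq : ∑ x ∈ T, wt (x : Fin n → F4) = ∑ _x ∈ T, d := by
    have h1 : ∑ x ∈ T, wt (x : Fin n → F4) ≤ (3 * m) * d := by
      rw [← harith]; exact hsub.trans hub
    rw [Finset.sum_const, smul_eq_mul, ← hTcard] at *
    omega
  -- every nonzero codeword has weight exactly d
  have hwt : ∀ x : C, x ≠ 0 → wt (x : Fin n → F4) = d := by
    intro x hx
    by_contra hne
    have hxT : x ∈ T := by rw [hT]; simp [hx]
    have hlt : ∑ _x ∈ T, d < ∑ x ∈ T, wt (x : Fin n → F4) :=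
      Finset.sum_lt_sum (fun y hy => hdle y hy)
        ⟨x, hxT, lt_of_le_of_ne (hdle x hxT) (fun h => hne h.symm)⟩
    omega
  -- all self inner products vanish (weights are even)
  have hQ : ∀ y ∈ C, hermInner y y = 0 := by
    intro y hy
    rw [herm_self]
    rcases eq_or_ne y 0 with h0 | h0
    · rw [h0, wt_zero]; simp
    · have hyd : wt y = d := hwt ⟨y, hy⟩ (fun h => h0 (congrArg Subtype.val h))
      rw [hyd]
      exact even_cast_F4 hdeven
  -- hence the code is Hermitian self-orthogonal
  have horth : ∀ x ∈ C, inHermDual C x := by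
    intro x hx y hy
    exact herm_polarize x y (hQ x hx) (hQ y hy)
      (hQ _ (C.add_mem hx hy))
      (fun w => hQ _ (C.add_mem hx (C.smul_mem w hy)))
  -- contradiction with LCD and existence of a nonzero codeword
  obtain ⟨x0, hx0C, hx0ne, -⟩ := hmin.1
  exact hx0ne (hLCD x0 hx0C (horth x0 hx0C))

/-- for `k ≥ 3` and `s ≥ 1`, there is no quaternary Hermitian LCD
`[((4^k-1)/3)s, k, 4^{k-1}s]` code. -/
theorem stmt6 (k s : ℕ) (hk : 3 ≤ k) (hs : 1 ≤ s) :
    ¬ ∃ C : Submodule F4 (Fin ((4 ^ k - 1) / 3 * s) → F4),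
      IsHermLCDCode ((4 ^ k - 1) / 3 * s) k (4 ^ (k - 1) * s) C := by
  rintro ⟨C, hrank, hLCD, hmin⟩
  have hq4 : 4 ^ k = 4 ^ (k - 1) * 4 := by
    rw [← pow_succ]
    congr 1
    omega
  have hdvd : 3 ∣ 4 ^ k - 1 := by
    have hmod : 4 ^ k % 3 = 1 := by
      rw [Nat.pow_mod]
      simp
    have h1 : 1 ≤ 4 ^ k := Nat.one_le_pow _ _ (by norm_num)
    omega
  have hm : 3 * ((4 ^ k - 1) / 3) + 1 = 4 ^ k := by
    obtain ⟨c, hc⟩ := hdvd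
    have h1 : 1 ≤ 4 ^ k := Nat.one_le_pow _ _ (by norm_num)
    omega
  have hdeven : Even (4 ^ (k - 1) * s) := by
    have h4 : (2 : ℕ) ∣ 4 ^ (k - 1) :=
      dvd_trans (by norm_num) (dvd_pow_self 4 (by omega : k - 1 ≠ 0))
    obtain ⟨c, hc⟩ := h4
    exact ⟨c * s, by rw [hc]; ring⟩
  exact noHermLCD_aux (4 ^ (k - 1)) ((4 ^ k - 1) / 3) s _ _ k rfl rfl hq4 hm hdeven
    C hrank hLCD hmin
end

section
/- There exists a quaternary Hermitian LCD [26, 3, 19] code; that is, a 3-dimensional 𝔽₄-linear subspace C of 𝔽₄²⁶ with C ∩ C^{⊥H} = {0} whose minimum weight equals 19. -/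
open scoped Classical

/-! The code is spanned by the rows of an explicit `3 × 26` generator matrix `G`. A codeword
`c G` that is Hermitian-orthogonal to every row satisfies `c (G Ḡᵀ) = 0`, so the code is Hermitian
LCD (and `G` has full rank) as soon as the Gram matrix `G Ḡᵀ` is nonsingular. That determinant
and the weights of all `63` nonzero codewords are evaluated by `decide` in a computable copy
`GF4` of `𝔽₄`, which maps isomorphically onto `GaloisField 2 2` by sending its generator to a
root of `X² + X + 1`. -/

open Matrix

theorem exists_mul_self_eq_add_one {F : Type*} [Field F] [Finite F] [CharP F 2]
    (hF : Nat.card F = 4) : ∃ w : F, w * w = w + 1 := by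
  have : Fintype F := Fintype.ofFinite F
  rw [Nat.card_eq_fintype_card] at hF
  have hlt : ({0, 1} : Finset F).card < (Finset.univ : Finset F).card := by
    rw [Finset.card_univ, hF]
    exact Finset.card_le_two.trans_lt (by norm_num)
  obtain ⟨w, -, hw⟩ := Finset.exists_mem_notMem_of_card_lt_card hlt
  simp only [Finset.mem_insert, Finset.mem_singleton, not_or] at hw
  have hcube : w ^ 3 = 1 := by simpa [hF] using FiniteField.pow_card_sub_one_eq_one w hw.1
  have : (w - 1) * (w * w + w + 1) = 0 := by linear_combination hcube
  exact ⟨w, by grind⟩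

-- `A` is a root of `X² + X + 1` and `B = A + 1 = A²`.
inductive GF4 | O | I | A | B
  deriving DecidableEq

namespace GF4

instance : Fintype GF4 where
  elems := {O, I, A, B}
  complete x := by cases x <;> decide

instance : Zero GF4 := ⟨O⟩
instance : One GF4 := ⟨I⟩
instance : Neg GF4 := ⟨id⟩

instance : Add GF4 where
  add
    | O, x => x | x, O => x
    | I, I => O | I, A => B | I, B => A
    | A, I => B | A, A => O | A, B => I
    | B, I => A | B, A => I | B, B => O

instance : Mul GF4 where
  mul
    | O, _ => O | _, O => O
    | I, x => x | x, I => x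
    | A, A => B | A, B => I
    | B, A => I | B, B => A

instance : CommRing GF4 where
  add_assoc := by decide
  zero_add := by decide
  add_zero := by decide
  add_comm := by decide
  neg_add_cancel := by decide
  mul_assoc := by decide
  one_mul := by decide
  mul_one := by decide
  left_distrib := by decide
  right_distrib := by decide
  zero_mul := by decide
  mul_zero := by decide
  mul_comm := by decide
  nsmul := nsmulRec
  zsmul := zsmulRec

theorem card : Nat.card GF4 = 4 := Nat.card_eq_fintype_card.trans rfl

theorem exists_mul_eq_one : ∀ x : GF4, x ≠ 0 → ∃ y, x * y = 1 := by decide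

theorem ringHom_injective {R : Type*} [Semiring R] [Nontrivial R] (f : GF4 →+* R) :
    Function.Injective f := by
  refine (injective_iff_map_eq_zero f).2 fun x hx => ?_
  by_contra hx0
  obtain ⟨y, hxy⟩ := exists_mul_eq_one x hx0
  simpa [hx] using congrArg f hxy

def lift {R : Type*} [CommRing R] [CharP R 2] (w : R) (hw : w * w = w + 1) : GF4 →+* R where
  toFun
    | O => 0
    | I => 1
    | A => w
    | B => w + 1
  map_one' := rfl
  map_zero' := rfl
  map_add' x y := by cases x <;> cases y <;> grind
  map_mul' x y := by cases x <;> cases y <;> grind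

theorem nonempty_ringEquiv_F4 : Nonempty (GF4 ≃+* F4) := by
  have hF4 : Nat.card F4 = 4 := GaloisField.card 2 2 (by norm_num)
  obtain ⟨w, hw⟩ := exists_mul_self_eq_add_one hF4
  exact ⟨.ofBijective (lift w hw) ((Nat.bijective_iff_injective_and_card _).2
    ⟨ringHom_injective _, card.trans hF4.symm⟩)⟩

end GF4

theorem Matrix.mem_span_range_iff_exists_vecMul {R ι α : Type*} [Fintype ι] [Semiring R]
    {G : Matrix ι α R} {x : α → R} : x ∈ Submodule.span R (Set.range G) ↔ ∃ c, c ᵥ* G = x := by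
  simp only [vecMul_eq_sum]
  exact Submodule.mem_span_range_iff_exists_fun R

def hermGram {R ι κ : Type*} [CommRing R] [Fintype κ] (G : Matrix ι κ R) : Matrix ι ι R :=
  G * (G.map (· ^ 2))ᵀ

theorem hermGram_map {R S F ι κ : Type*} [CommRing R] [CommRing S] [FunLike F R S]
    [RingHomClass F R S] [Fintype κ] (f : F) (G : Matrix ι κ R) :
    hermGram (G.map f) = (hermGram G).map f := by
  simp only [hermGram, Matrix.map_mul, transpose_map, Matrix.map_map, Function.comp_def, map_pow]

section HermitianCode

variable {ι : Type*} [Fintype ι] {n : ℕ} {G : Matrix ι (Fin n) F4}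

theorem hermInner_vecMul (c : ι → F4) (i : ι) :
    hermInner (c ᵥ* G) (G i) = (c ᵥ* hermGram G) i := by
  rw [hermGram, ← vecMul_vecMul]
  simp [hermInner, vecMul, dotProduct]

theorem eq_zero_of_hermInner_vecMul_eq_zero [DecidableEq ι] (hG : (hermGram G).det ≠ 0)
    {c : ι → F4} (hc : ∀ i, hermInner (c ᵥ* G) (G i) = 0) : c = 0 := by
  refine eq_zero_of_vecMul_eq_zero hG (funext fun i => ?_)
  rw [← hermInner_vecMul, hc, Pi.zero_apply]

theorem linearIndependent_of_det_hermGram_ne_zero [DecidableEq ι]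
    (hG : (hermGram G).det ≠ 0) : LinearIndependent F4 G := by
  refine Fintype.linearIndependent_iff.2 fun c hc => ?_
  rw [← vecMul_eq_sum] at hc
  have : c = 0 := eq_zero_of_hermInner_vecMul_eq_zero hG fun i => by simp [hc, hermInner]
  simp [this]

theorem isHermLCD_span_of_det_hermGram_ne_zero [DecidableEq ι] (hG : (hermGram G).det ≠ 0) :
    IsHermLCD (Submodule.span F4 (Set.range G)) := by
  intro x hx hdual
  obtain ⟨c, rfl⟩ := mem_span_range_iff_exists_vecMul.1 hx
  have : c = 0 := eq_zero_of_hermInner_vecMul_eq_zero hG fun i =>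
    hdual _ (Submodule.subset_span ⟨i, rfl⟩)
  simp [this]

theorem wt_eq_hammingNorm (x : Fin n → F4) : wt x = hammingNorm x := by
  simp [wt, hammingNorm]

theorem minWtIs_span {d : ℕ} (hd : 0 < d) (hle : ∀ c, c ≠ 0 → d ≤ wt (c ᵥ* G))
    (hex : ∃ c, wt (c ᵥ* G) = d) : minWtIs (Submodule.span F4 (Set.range G)) d := by
  refine ⟨?_, fun x hx hx0 => ?_⟩
  · obtain ⟨c, hc⟩ := hex
    refine ⟨c ᵥ* G, mem_span_range_iff_exists_vecMul.2 ⟨c, rfl⟩, fun h => ?_, hc⟩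
    simp [h, wt_eq_hammingNorm] at hc
    omega
  · obtain ⟨c, rfl⟩ := mem_span_range_iff_exists_vecMul.1 hx
    exact hle c (by rintro rfl; simp at hx0)

end HermitianCode

theorem wt_vecMul_map {R ι : Type*} [CommRing R] [DecidableEq R] [Fintype ι] {n : ℕ}
    (e : R ≃+* F4) (G : Matrix ι (Fin n) R) (c : ι → F4) :
    wt (c ᵥ* G.map e) = hammingNorm ((e.symm ∘ c) ᵥ* G) := by
  have : c ᵥ* G.map e = fun j => e (((e.symm ∘ c) ᵥ* G) j) := by
    funext j
    simp [vecMul, dotProduct, map_sum]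
  rw [wt_eq_hammingNorm, this, hammingNorm_comp _ (fun _ => e.injective) fun _ => map_zero e]

namespace GF4

def lcdGenerator : Matrix (Fin 3) (Fin 26) GF4 :=
  !![O, I, I, I, I, I, I, I, I, O, O, I, I, O, I, I, O, I, O, I, I, I, I, I, I, O;
     I, B, A, O, I, A, O, A, I, I, I, O, I, I, I, O, O, B, I, O, A, O, I, A, B, I;
     B, O, B, A, O, O, B, I, A, A, O, A, B, A, I, B, I, A, O, I, I, O, B, A, I, I]

theorem det_hermGram_lcdGenerator_ne_zero : (hermGram lcdGenerator).det ≠ 0 := by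
  decide

theorem le_hammingNorm_vecMul_lcdGenerator :
    ∀ c : Fin 3 → GF4, c ≠ 0 → 19 ≤ hammingNorm (c ᵥ* lcdGenerator) := by
  decide

theorem exists_hammingNorm_vecMul_lcdGenerator_eq :
    ∃ c : Fin 3 → GF4, hammingNorm (c ᵥ* lcdGenerator) = 19 := by
  decide

end GF4

/-- there exists a quaternary Hermitian LCD `[26, 3, 19]` code. -/
theorem stmt10 :
    ∃ C : Submodule F4 (Fin 26 → F4), IsHermLCDCode 26 3 19 C := by
  obtain ⟨e⟩ := GF4.nonempty_ringEquiv_F4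
  have hG : (hermGram (GF4.lcdGenerator.map e)).det ≠ 0 := by
    rw [hermGram_map, ← RingEquiv.mapMatrix_apply, ← RingEquiv.map_det]
    exact (map_ne_zero_iff e e.injective).2 GF4.det_hermGram_lcdGenerator_ne_zero
  refine ⟨Submodule.span F4 (Set.range (GF4.lcdGenerator.map e)), ?_,
    isHermLCD_span_of_det_hermGram_ne_zero hG, minWtIs_span (by norm_num) (fun c hc => ?_) ?_⟩
  · rw [finrank_span_eq_card (linearIndependent_of_det_hermGram_ne_zero hG), Fintype.card_fin]
  · rw [wt_vecMul_map]
    exact GF4.le_hammingNorm_vecMul_lcdGenerator _ (by simpa [funext_iff] using hc)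
  · obtain ⟨c, hc⟩ := GF4.exists_hammingNorm_vecMul_lcdGenerator_eq
    exact ⟨e ∘ c, by rw [wt_vecMul_map]; simpa [Function.comp_def] using hc⟩
end
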